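/- arXiv:2202.00611 — 5 statements merged into one kernel-verified Lean document; each statement's English description precedes it below -/
import Mathlib

section
/- For any real number A ≥ 0, integer p ≥ 1, and Z ∈ [0,1] (with Z ≠ 1 if p = 1), the iterated integral ∫_{0 ≤ z_p ≤ ... ≤ z_1 ≤ Z} (dz_1/z_1) ⋯ (dz_{p-1}/z_{p-1}) (dz_p/(1-z_p)) · z_p^A equals the convergent series ∑_{n=1}^∞ Z^{n+A}/(n+A)^p. -/
open MeasureTheory

/-!
Expand `1/(1 - z_p) = ∑ z_p^n` and integrate term by term (monotone convergence, everything
being nonnegative): integrating `x^(n+A)` over `[0, Z]` gives `Z^(n+1+A)/(n+1+A)`, and each of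
the remaining `p - 1` integrations against `dz/z` divides the `n`-th term once more by `n+1+A`.
The computation is done for the lower Lebesgue integral `∫⁻` of the nonnegative integrand and
then transferred to the real integral and the real series by `toReal`.
-/

open Set ENNReal

section FinCons

variable {α : Type*} [MeasureSpace α] [SigmaFinite (volume : Measure α)]

theorem lintegral_eq_lintegral_fin_cons {n : ℕ} {f : (Fin (n + 1) → α) → ℝ≥0∞}
    (hf : Measurable f) : ∫⁻ z, f z = ∫⁻ x, ∫⁻ w, f (Fin.cons x w) := by
  set e := MeasurableEquiv.piFinSuccAbove (fun _ : Fin (n + 1) => α) 0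
  have hm : Measurable fun q => f (e.symm q) := hf.comp e.symm.measurable
  rw [← (volume_preserving_piFinSuccAbove (fun _ : Fin (n + 1) => α) 0).symm.lintegral_comp hf,
    Measure.volume_eq_prod, lintegral_prod _ hm.aemeasurable]
  simp [e, MeasurableEquiv.piFinSuccAbove_symm_apply, Fin.consEquiv, volume_pi]

end FinCons

namespace IteratedIntegral

def simplex (p : ℕ) (Z : ℝ) : Set (Fin (p + 1) → ℝ) :=
  {z | (∀ i j : Fin (p + 1), i ≤ j → z j ≤ z i) ∧ 0 ≤ z (Fin.last p) ∧ z 0 ≤ Z}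

noncomputable def integrand (A : ℝ) (p : ℕ) (z : Fin (p + 1) → ℝ) : ℝ :=
  (∏ i : Fin p, (z i.castSucc)⁻¹) * z (Fin.last p) ^ A / (1 - z (Fin.last p))

theorem isClosed_simplex (p : ℕ) (Z : ℝ) : IsClosed (simplex p Z) := by
  simp only [simplex, ofPred_and, ofPred_forall]
  exact (isClosed_iInter fun i => isClosed_iInter fun j => isClosed_iInter fun _ =>
      isClosed_le (continuous_apply j) (continuous_apply i)).inter
    ((isClosed_le continuous_const (continuous_apply _)).inter
      (isClosed_le (continuous_apply _) continuous_const))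

theorem measurableSet_simplex (p : ℕ) (Z : ℝ) : MeasurableSet (simplex p Z) :=
  (isClosed_simplex p Z).measurableSet

theorem measurable_integrand (A : ℝ) (p : ℕ) : Measurable (integrand A p) := by
  unfold integrand; fun_prop

theorem mem_simplex {p : ℕ} {Z : ℝ} {z : Fin (p + 1) → ℝ} :
    z ∈ simplex p Z ↔ Antitone z ∧ 0 ≤ z (Fin.last p) ∧ z 0 ≤ Z :=
  Iff.rfl

theorem simplex_zero (Z : ℝ) : simplex 0 Z = MeasurableEquiv.funUnique (Fin 1) ℝ ⁻¹' Icc 0 Z := by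
  ext z
  simp [simplex, Subsingleton.elim _ (0 : Fin 1)]

theorem cons_mem_simplex_succ_iff {p : ℕ} {Z x : ℝ} {w : Fin (p + 1) → ℝ} :
    Fin.cons x w ∈ simplex (p + 1) Z ↔ x ∈ Icc 0 Z ∧ w ∈ simplex p x := by
  have hanti : Antitone (Fin.cons x w : Fin (p + 2) → ℝ) ↔ w 0 ≤ x ∧ Antitone w := by
    simp only [Fin.antitone_iff_succ_le, Fin.forall_fin_succ, Fin.cons_succ, Fin.castSucc_zero,
      Fin.cons_zero, ← Fin.succ_castSucc]
  simp only [mem_simplex, hanti, ← Fin.succ_last, Fin.cons_succ, Fin.cons_zero, mem_Icc]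
  constructor
  · rintro ⟨⟨hw0, hw⟩, hlast, hxZ⟩
    exact ⟨⟨hlast.trans ((hw (Fin.zero_le _)).trans hw0), hxZ⟩, hw, hlast, hw0⟩
  · rintro ⟨⟨-, hxZ⟩, hw, hlast, hw0⟩
    exact ⟨⟨hw0, hw⟩, hlast, hxZ⟩

theorem integrand_const_zero (A x : ℝ) : integrand A 0 (fun _ => x) = x ^ A / (1 - x) := by
  simp [integrand]

theorem integrand_cons (A : ℝ) (p : ℕ) (x : ℝ) (w : Fin (p + 1) → ℝ) :
    integrand A (p + 1) (Fin.cons x w) = x⁻¹ * integrand A p w := by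
  simp only [integrand, Fin.prod_univ_succ, ← Fin.succ_last, ← Fin.succ_castSucc, Fin.cons_succ]
  simp only [Fin.castSucc_zero, Fin.cons_zero]
  ring

theorem integrand_nonneg {A Z : ℝ} {p : ℕ} (hZ : Z ≤ 1) {z : Fin (p + 1) → ℝ}
    (hz : z ∈ simplex p Z) : 0 ≤ integrand A p z := by
  obtain ⟨hanti, hlast, hfirst⟩ := hz
  have hnonneg i : 0 ≤ z i := hlast.trans (hanti i _ (Fin.le_last i))
  have hle : z (Fin.last p) ≤ 1 := (hanti 0 _ (Fin.zero_le _)).trans (hfirst.trans hZ)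
  unfold integrand
  exact div_nonneg (mul_nonneg (Finset.prod_nonneg fun i _ => inv_nonneg.mpr (hnonneg _))
    (Real.rpow_nonneg (hnonneg _) A)) (sub_nonneg.mpr hle)

theorem setLIntegral_simplex_zero {Z : ℝ} {g : (Fin 1 → ℝ) → ℝ≥0∞} :
    ∫⁻ z in simplex 0 Z, g z = ∫⁻ x in Icc 0 Z, g (fun _ => x) := by
  have e := volume_preserving_funUnique (Fin 1) ℝ
  rw [simplex_zero, ← e.setLIntegral_comp_preimage_emb
    (MeasurableEquiv.funUnique (Fin 1) ℝ).measurableEmbedding]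
  congr 1 with z
  exact congrArg g (funext fun i => congrArg z (Subsingleton.elim (α := Fin 1) _ _))

theorem setLIntegral_simplex_succ {p : ℕ} {Z : ℝ} {g : (Fin (p + 1 + 1) → ℝ) → ℝ≥0∞}
    (hg : Measurable g) :
    ∫⁻ z in simplex (p + 1) Z, g z = ∫⁻ x in Icc 0 Z, ∫⁻ w in simplex p x, g (Fin.cons x w) := by
  rw [← lintegral_indicator (measurableSet_simplex _ _),
    lintegral_eq_lintegral_fin_cons (hg.indicator (measurableSet_simplex _ _)),
    ← lintegral_indicator measurableSet_Icc]
  congr 1 with x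
  by_cases hx : x ∈ Icc 0 Z
  · rw [indicator_of_mem hx, ← lintegral_indicator (measurableSet_simplex _ _)]
    congr 1 with w
    by_cases hw : w ∈ simplex p x
    · rw [indicator_of_mem hw, indicator_of_mem (cons_mem_simplex_succ_iff.mpr ⟨hx, hw⟩)]
    · rw [indicator_of_notMem hw,
        indicator_of_notMem fun h => hw (cons_mem_simplex_succ_iff.mp h).2]
  · rw [indicator_of_notMem hx]
    exact (lintegral_congr fun w =>
      indicator_of_notMem (fun h => hx (cons_mem_simplex_succ_iff.mp h).1) _).trans lintegral_zero

theorem lintegral_Ioo_ofReal_rpow_div {r Z c : ℝ} (hr : -1 < r) (hZ : 0 ≤ Z) (hc : 0 ≤ c) :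
    ∫⁻ x in Ioo 0 Z, ENNReal.ofReal (x ^ r / c) = ENNReal.ofReal (Z ^ (r + 1) / ((r + 1) * c)) := by
  rw [setLIntegral_congr Ioo_ae_eq_Ioc]
  have hint : IntegrableOn (fun x : ℝ => x ^ r / c) (Ioc 0 Z) :=
    (intervalIntegrable_iff_integrableOn_Ioc_of_le hZ).mp
      ((intervalIntegral.intervalIntegrable_rpow' hr).div_const c)
  have hnonneg : 0 ≤ᵐ[volume.restrict (Ioc 0 Z)] fun x : ℝ => x ^ r / c :=
    ae_restrict_of_forall_mem measurableSet_Ioc fun x hx =>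
      div_nonneg (Real.rpow_nonneg hx.1.le r) hc
  rw [← ofReal_integral_eq_lintegral_ofReal hint hnonneg, ← intervalIntegral.integral_of_le hZ,
    intervalIntegral.integral_div, integral_rpow (Or.inl hr), Real.zero_rpow (by linarith),
    sub_zero, div_div]

theorem ofReal_rpow_div_one_sub_eq_tsum {A x : ℝ} (hx0 : 0 < x) (hx1 : x < 1) :
    ENNReal.ofReal (x ^ A / (1 - x)) = ∑' n : ℕ, ENNReal.ofReal (x ^ ((n : ℝ) + A)) := by
  have hterm (n : ℕ) : x ^ ((n : ℝ) + A) = x ^ A * x ^ n := by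
    rw [Real.rpow_add hx0, Real.rpow_natCast, mul_comm]
  have hsum : Summable fun n : ℕ => x ^ ((n : ℝ) + A) := by
    simpa only [hterm] using (summable_geometric_of_lt_one hx0.le hx1).mul_left (x ^ A)
  rw [← ENNReal.ofReal_tsum_of_nonneg (fun n => Real.rpow_nonneg hx0.le _) hsum]
  simp only [hterm, tsum_mul_left, tsum_geometric_of_lt_one hx0.le hx1, div_eq_mul_inv]

theorem lintegral_Ioo_tsum_ofReal_rpow_div {A Z : ℝ} {c : ℕ → ℝ} (hA : -1 < A) (hZ : 0 ≤ Z)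
    (hc : ∀ n, 0 ≤ c n) :
    ∫⁻ x in Ioo 0 Z, ∑' n : ℕ, ENNReal.ofReal (x ^ ((n : ℝ) + A) / c n) =
      ∑' n : ℕ, ENNReal.ofReal (Z ^ ((n : ℝ) + 1 + A) / (((n : ℝ) + 1 + A) * c n)) := by
  rw [lintegral_tsum fun n => by fun_prop]
  refine tsum_congr fun n => ?_
  rw [lintegral_Ioo_ofReal_rpow_div (by linarith [n.cast_nonneg (α := ℝ)]) hZ (hc n),
    add_right_comm]

theorem lintegral_simplex_integrand {A : ℝ} (hA : -1 < A) (p : ℕ) {Z : ℝ} (hZ : Z ∈ Icc 0 1) :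
    ∫⁻ z in simplex p Z, ENNReal.ofReal (integrand A p z) =
      ∑' n : ℕ, ENNReal.ofReal (Z ^ ((n : ℝ) + 1 + A) / ((n : ℝ) + 1 + A) ^ (p + 1)) := by
  induction p generalizing Z with
  | zero =>
    rw [setLIntegral_simplex_zero, ← setLIntegral_congr Ioo_ae_eq_Icc]
    calc ∫⁻ x in Ioo 0 Z, ENNReal.ofReal (integrand A 0 fun _ => x)
        = ∫⁻ x in Ioo 0 Z, ∑' n : ℕ, ENNReal.ofReal (x ^ ((n : ℝ) + A) / 1) := by
          refine setLIntegral_congr_fun measurableSet_Ioo fun x hx => ?_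
          simp only [integrand_const_zero, div_one]
          exact ofReal_rpow_div_one_sub_eq_tsum hx.1 (hx.2.trans_le hZ.2)
      _ = _ := by
          simp only [lintegral_Ioo_tsum_ofReal_rpow_div hA hZ.1 fun _ => zero_le_one, mul_one,
            zero_add, pow_one]
  | succ p ih =>
    rw [setLIntegral_simplex_succ (measurable_integrand A _).ennreal_ofReal,
      ← setLIntegral_congr Ioo_ae_eq_Icc]
    calc ∫⁻ x in Ioo 0 Z, ∫⁻ w in simplex p x, ENNReal.ofReal (integrand A (p + 1) (Fin.cons x w))
        = ∫⁻ x in Ioo 0 Z, ∑' n : ℕ,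
            ENNReal.ofReal (x ^ ((n : ℝ) + A) / ((n : ℝ) + 1 + A) ^ (p + 1)) := by
          refine setLIntegral_congr_fun measurableSet_Ioo fun x hx => ?_
          simp only [integrand_cons, ENNReal.ofReal_mul (inv_nonneg.mpr hx.1.le)]
          rw [lintegral_const_mul' _ _ ofReal_ne_top, ih ⟨hx.1.le, hx.2.le.trans hZ.2⟩,
            ← ENNReal.tsum_mul_left]
          refine tsum_congr fun n => ?_
          rw [← ENNReal.ofReal_mul (inv_nonneg.mpr hx.1.le), add_right_comm (n : ℝ) 1 A,
            Real.rpow_add_one hx.1.ne']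
          congr 1
          field_simp [hx.1.ne']
      _ = _ := by
          rw [lintegral_Ioo_tsum_ofReal_rpow_div hA hZ.1 fun n =>
            pow_nonneg (by linarith [n.cast_nonneg (α := ℝ)]) _]
          simp only [← pow_succ']

end IteratedIntegral

/-- The paper's `p ≥ 1` is `p + 1` here, and its variables `z_1 ≥ ⋯ ≥ z_{p+1}` are
`z 0 ≥ ⋯ ≥ z p`. -/
theorem stmt0_general (A : ℝ) (hA : 0 ≤ A) (p : ℕ) (Z : ℝ) (hZ : Z ∈ Set.Icc (0:ℝ) 1) :
    (∫ z : Fin (p+1) → ℝ in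
        {z | (∀ i j : Fin (p+1), i ≤ j → z j ≤ z i) ∧ 0 ≤ z (Fin.last p) ∧ z 0 ≤ Z},
      (∏ i : Fin p, (z i.castSucc)⁻¹) * (z (Fin.last p)) ^ A / (1 - z (Fin.last p)))
    = ∑' n : ℕ, Z ^ ((n : ℝ) + 1 + A) / ((n : ℝ) + 1 + A) ^ (p + 1) := by
  change ∫ z in IteratedIntegral.simplex p Z, IteratedIntegral.integrand A p z = _
  have hnonneg : ∀ᵐ z ∂volume.restrict (IteratedIntegral.simplex p Z),
      0 ≤ IteratedIntegral.integrand A p z :=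
    ae_restrict_of_forall_mem (IteratedIntegral.measurableSet_simplex p Z) fun _ hz =>
      IteratedIntegral.integrand_nonneg hZ.2 hz
  rw [integral_eq_lintegral_of_nonneg_ae hnonneg
      (IteratedIntegral.measurable_integrand A p).aestronglyMeasurable,
    IteratedIntegral.lintegral_simplex_integrand (by linarith) p hZ,
    ENNReal.tsum_toReal_eq fun _ => ofReal_ne_top]
  exact tsum_congr fun n =>
    ENNReal.toReal_ofReal (div_nonneg (Real.rpow_nonneg hZ.1 _) (by positivity))

/-- series representation of the basic iterated integral.
We write the integer `p ≥ 1` of the statement as `p + 1` with `p : ℕ`;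
the condition "`Z ≠ 1` if `p = 1`" becomes `p = 0 → Z ≠ 1`.
The integration variables are `z 0 = z_1 ≥ z 1 ≥ ⋯ ≥ z p = z_p` and the
simplex is `{0 ≤ z_p ≤ ⋯ ≤ z_1 ≤ Z}`. -/
theorem stmt0 (A : ℝ) (hA : 0 ≤ A) (p : ℕ) (Z : ℝ) (hZ : Z ∈ Set.Icc (0:ℝ) 1)
    (hZ1 : p = 0 → Z ≠ 1) :
    (∫ z : Fin (p+1) → ℝ in
        {z | (∀ i j : Fin (p+1), i ≤ j → z j ≤ z i) ∧ 0 ≤ z (Fin.last p) ∧ z 0 ≤ Z},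
      (∏ i : Fin p, (z i.castSucc)⁻¹) * (z (Fin.last p)) ^ A / (1 - z (Fin.last p)))
    = ∑' n : ℕ, Z ^ ((n : ℝ) + 1 + A) / ((n : ℝ) + 1 + A) ^ (p + 1) :=
  stmt0_general A hA p Z hZ
end

section
/- For any integers s ≥ 1 and s_1, ..., s_r ≥ 1 with s_1 ≤ ⋯ ≤ s_r, the Mordell-Tornheim series MT(s_1, ..., s_r | s) = ∑_{n_1,...,n_r ≥ 1} 1/(n_1^{s_1} ⋯ n_r^{s_r}(n_1+⋯+n_r)^s) converges, and its value is a ℤ-linear combination of multiple zeta values of weight s + s_1 + ⋯ + s_r and depth r. -/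
/-!
Write `L_A(x) = ∑_{v ∈ A} (x_v + 1)` for `A ⊆ {0, …, r-1}`. The Mordell–Tornheim summand is
`∏_v L_{D v}^{-k_v} · L_univ^{-s}` for the forest of singletons `D v = {v}`, and every such
summand attached to a rooted forest (`D v` = descendants of `v`) with positive exponents is
summable, being bounded by `∏_v (x_v + 1)^{-(1 + 1/r)}`. If the forest is not a chain, take two
sibling subtrees `u`, `w` and put `m = L_{D u}`, `n = L_{D w}`, so that `m + n = L_{D u ∪ D w}`.
Euler's partial fraction identity
`1/(m^a n^b) = ∑_{i<a} C(b+i-1,i) / (m^{a-i} (m+n)^{b+i})`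
`            + ∑_{i<b} C(a+i-1,i) / (n^{b-i} (m+n)^{a+i})`
rewrites the summand as a combination, with nonnegative integer coefficients, of summands of
forests in which `u` has been grafted below `w` or `w` below `u`; the total weight is unchanged
and the exponents stay positive. Each graft strictly enlarges `D`, so the process ends in
chains `D (e 0) ⊋ D (e 1) ⊋ ⋯`, and the sum over a chain is a multiple zeta value once the
variables are relabelled along `e`, with `s` added to the outermost exponent.
-/

/-- The summand of the Mordell–Tornheim series. -/
noncomputable def MTterm (r : ℕ) (s' : Fin r → ℕ) (s : ℕ) (n : Fin r → ℕ) : ℝ :=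
  1 / ((∏ i, ((n i : ℝ) + 1) ^ s' i) * (∑ i, ((n i : ℝ) + 1)) ^ s)

/-- The multiple zeta value `ζ(k_0,…,k_{r-1}) = ∑_{m_0 > m_1 > ⋯ > m_{r-1} ≥ 1}
∏ m_i^{-k_i}`, parametrised by `m i = ∑_{j ≥ i} (a j + 1)`. -/
noncomputable def MZV (r : ℕ) (k : Fin r → ℕ) : ℝ :=
  ∑' a : Fin r → ℕ, ∏ i, ((∑ j ∈ Finset.Ici i, ((a j : ℝ) + 1)) ^ k i)⁻¹

open Finset Function

section EulerPartialFractions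

variable {K : Type*} [Field K]

/-- With `z = m + n`, `eulerPart a b m z + eulerPart b a n z` is Euler's partial fraction
decomposition of `1 / (m ^ a * n ^ b)`; note `b.multichoose i = (b + i - 1).choose i`. -/
def eulerPart (a b : ℕ) (m z : K) : K :=
  ∑ i ∈ range a, (b.multichoose i : K) * (m ^ (a - i) * z ^ (b + i))⁻¹

lemma eulerPart_zero_left (b : ℕ) (m z : K) : eulerPart 0 b m z = 0 := by
  simp [eulerPart]

lemma eulerPart_zero_right {a : ℕ} (ha : a ≠ 0) (m z : K) : eulerPart a 0 m z = (m ^ a)⁻¹ := by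
  rw [eulerPart, sum_eq_single_of_mem 0 (mem_range.2 (Nat.pos_of_ne_zero ha))]
  · simp
  · rintro (_ | i) _ hi
    · exact absurd rfl hi
    · simp [Nat.multichoose_zero_succ]

lemma eulerPart_succ_succ (a b : ℕ) (m z : K) :
    eulerPart (a + 1) (b + 1) m z = z⁻¹ * (eulerPart a (b + 1) m z + eulerPart (a + 1) b m z) := by
  simp only [eulerPart, sum_range_succ' _ a, Nat.multichoose_succ_succ, Nat.multichoose_zero_right,
    Nat.add_sub_add_right, Nat.cast_add, add_mul, sum_add_distrib, mul_add, mul_sum]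
  rw [add_comm (∑ _ ∈ _, _) (∑ _ ∈ _, _), add_assoc]
  congr 1
  · refine sum_congr rfl fun i _ => by ring
  congr 1
  · refine sum_congr rfl fun i _ => by ring
  · ring

theorem inv_pow_mul_pow_eq_eulerPart_add {m n : K} (hm : m ≠ 0) (hn : n ≠ 0) (hmn : m + n ≠ 0) :
    ∀ {a b : ℕ}, a + b ≠ 0 →
      (m ^ a * n ^ b)⁻¹ = eulerPart a b m (m + n) + eulerPart b a n (m + n)
  | 0, b, h => by rw [eulerPart_zero_left, eulerPart_zero_right (by omega)]; simp
  | a + 1, 0, _ => by rw [eulerPart_zero_left, eulerPart_zero_right (by omega)]; simp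
  | a + 1, b + 1, _ => by
    have hstep : (m ^ (a + 1) * n ^ (b + 1))⁻¹
        = (m + n)⁻¹ * ((m ^ a * n ^ (b + 1))⁻¹ + (m ^ (a + 1) * n ^ b)⁻¹) := by
      field_simp
      ring
    rw [hstep, inv_pow_mul_pow_eq_eulerPart_add hm hn hmn (a := a) (b := b + 1) (by omega),
      inv_pow_mul_pow_eq_eulerPart_add hm hn hmn (a := a + 1) (b := b) (by omega),
      eulerPart_succ_succ, eulerPart_succ_succ]
    ring

end EulerPartialFractions

lemma summable_prod_pi {ι κ : Type*} [Fintype ι] {f : ι → κ → ℝ} (hf0 : ∀ i n, 0 ≤ f i n)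
    (hf : ∀ i, Summable (f i)) : Summable fun x : ι → κ => ∏ i, f i (x i) := by
  classical
  refine summable_of_sum_le (c := ∏ i, ∑' n, f i n) (fun x => prod_nonneg fun i _ => hf0 i (x i))
    fun u => ?_
  calc ∑ x ∈ u, ∏ i, f i (x i)
      ≤ ∑ x ∈ Fintype.piFinset fun i => u.image (· i), ∏ i, f i (x i) :=
        sum_le_sum_of_subset_of_nonneg
          (fun x hx => Fintype.mem_piFinset.2 fun i => mem_image_of_mem _ hx)
          fun x _ _ => prod_nonneg fun i _ => hf0 i (x i)
    _ = ∏ i, ∑ n ∈ u.image (· i), f i n := (prod_univ_sum _ _).symm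
    _ ≤ ∏ i, ∑' n, f i n :=
        prod_le_prod (fun i _ => sum_nonneg fun n _ => hf0 i n)
          fun i _ => (hf i).sum_le_tsum _ fun n _ => hf0 i n

lemma summable_inv_nat_add_one_rpow {p : ℝ} (hp : 1 < p) :
    Summable fun n : ℕ => (((n : ℝ) + 1) ^ p)⁻¹ := by
  simpa using (summable_nat_add_iff 1).2 (Real.summable_nat_rpow_inv.2 hp)

section Forests

variable {ι : Type*}

noncomputable def blockSum (x : ι → ℕ) (A : Finset ι) : ℝ := ∑ v ∈ A, ((x v : ℝ) + 1)

lemma le_blockSum (x : ι → ℕ) {A : Finset ι} {v : ι} (hv : v ∈ A) :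
    (x v : ℝ) + 1 ≤ blockSum x A :=
  single_le_sum (f := fun v => (x v : ℝ) + 1) (fun _ _ => by positivity) hv

lemma one_le_blockSum (x : ι → ℕ) {A : Finset ι} {v : ι} (hv : v ∈ A) : 1 ≤ blockSum x A :=
  le_trans (by simp) (le_blockSum x hv)

lemma blockSum_union [DecidableEq ι] (x : ι → ℕ) {A B : Finset ι} (hd : Disjoint A B) :
    blockSum x (A ∪ B) = blockSum x A + blockSum x B :=
  sum_union hd

/-- `s` is the exponent of an extra root lying above all of `ι`. -/
noncomputable def forestTerm [Fintype ι] (D : ι → Finset ι) (k : ι → ℕ) (s : ℕ) (x : ι → ℕ) : ℝ :=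
  ((∏ v, blockSum x (D v) ^ k v) * blockSum x univ ^ s)⁻¹

lemma forestTerm_nonneg [Fintype ι] (D : ι → Finset ι) (k : ι → ℕ) (s : ℕ) (x : ι → ℕ) :
    0 ≤ forestTerm D k s x := by
  unfold forestTerm blockSum
  positivity

lemma forestTerm_le_prod [Fintype ι] [Nonempty ι] {D : ι → Finset ι} (hD : ∀ v, v ∈ D v) {k : ι → ℕ}
    (hk : ∀ v, 1 ≤ k v) {s : ℕ} (hs : 1 ≤ s) (x : ι → ℕ) :
    forestTerm D k s x ≤ ∏ v, (((x v : ℝ) + 1) ^ (1 + 1 / (Fintype.card ι : ℝ)))⁻¹ := by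
  set c := Fintype.card ι
  set P := ∏ v, ((x v : ℝ) + 1)
  set S := blockSum x univ
  have hP : 0 < P := prod_pos fun v _ => by positivity
  have hPD : P ≤ ∏ v, blockSum x (D v) ^ k v :=
    prod_le_prod (fun v _ => by positivity) fun v _ =>
      (le_blockSum x (hD v)).trans
        (le_self_pow₀ (one_le_blockSum x (hD v)) (by have := hk v; omega))
  have hPS : P ≤ S ^ c := by
    calc P ≤ ∏ _v : ι, S :=
          prod_le_prod (fun v _ => by positivity) fun v _ => le_blockSum x (mem_univ v)
      _ = S ^ c := by rw [prod_const, card_univ]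
  have hroot : P ^ (1 / (c : ℝ)) ≤ S ^ s := by
    have hc : (c : ℝ) ≠ 0 := by simp [c, Fintype.card_ne_zero]
    calc P ^ (1 / (c : ℝ)) ≤ (S ^ c) ^ (1 / (c : ℝ)) := Real.rpow_le_rpow hP.le hPS (by positivity)
      _ = S := by
        rw [← Real.rpow_natCast, ← Real.rpow_mul (by unfold S blockSum; positivity),
          mul_one_div_cancel hc, Real.rpow_one]
      _ ≤ S ^ s := le_self_pow₀ (one_le_blockSum x (mem_univ (Classical.arbitrary ι))) (by omega)
  rw [prod_inv_distrib, Real.finsetProd_rpow _ _ (fun v _ => by positivity), Real.rpow_add hP,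
    Real.rpow_one, forestTerm]
  exact inv_anti₀ (by positivity) (mul_le_mul hPD hroot (by positivity) (hP.le.trans hPD))

lemma summable_forestTerm [Fintype ι] [Nonempty ι] {D : ι → Finset ι} (hD : ∀ v, v ∈ D v)
    {k : ι → ℕ} (hk : ∀ v, 1 ≤ k v) {s : ℕ} (hs : 1 ≤ s) : Summable (forestTerm D k s) := by
  set p : ℝ := 1 + 1 / (Fintype.card ι : ℝ)
  have hp : 1 < p := lt_add_of_pos_right 1 (by simp [Fintype.card_pos])
  have hprod := summable_prod_pi (f := fun (_ : ι) (n : ℕ) => (((n : ℝ) + 1) ^ p)⁻¹)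
    (fun _ _ => by positivity) fun _ => summable_inv_nat_add_one_rpow hp
  exact hprod.of_nonneg_of_le (forestTerm_nonneg D k s) (forestTerm_le_prod hD hk hs)

/-- `D v` is the set of descendants of `v`, `v` included, in a rooted forest on `ι`. -/
structure IsForest (D : ι → Finset ι) : Prop where
  mem_self (v : ι) : v ∈ D v
  subset_of_mem {u v : ι} : u ∈ D v → D u ⊆ D v
  laminar (u v : ι) : D u ⊆ D v ∨ D v ⊆ D u ∨ Disjoint (D u) (D v)
  injective : Injective D

lemma isForest_singleton : IsForest fun v : ι => ({v} : Finset ι) where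
  mem_self := mem_singleton_self
  subset_of_mem h := by rw [mem_singleton.1 h]
  laminar u v := by
    obtain rfl | huv := eq_or_ne u v
    · exact .inl le_rfl
    · exact .inr <| .inr <| disjoint_singleton.2 huv
  injective := singleton_injective

/-- The subtrees at `u` and `w` are disjoint and every subtree strictly containing one of them
meets the other: `u` and `w` have the same parent, or are both roots. -/
def IsSiblingPair (D : ι → Finset ι) (u w : ι) : Prop :=
  Disjoint (D u) (D w) ∧ (∀ t, D u ⊆ D t → Disjoint (D t) (D w) → D t ⊆ D u) ∧
    ∀ t, D w ⊆ D t → Disjoint (D t) (D u) → D t ⊆ D w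

lemma IsSiblingPair.symm {D : ι → Finset ι} {u w : ι} (h : IsSiblingPair D u w) :
    IsSiblingPair D w u :=
  ⟨h.1.symm, h.2.2, h.2.1⟩

lemma IsSiblingPair.ne {D : ι → Finset ι} {u w : ι} (hD : IsForest D) (h : IsSiblingPair D u w) :
    u ≠ w :=
  fun huw => disjoint_left.1 h.1 (hD.mem_self u) (huw ▸ hD.mem_self w)

lemma IsForest.exists_isSiblingPair [Fintype ι] {D : ι → Finset ι} (hD : IsForest D)
    (hc : ¬ ∀ u v, D u ⊆ D v ∨ D v ⊆ D u) : ∃ u w, IsSiblingPair D u w := by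
  classical
  have hne : (univ.filter fun p : ι × ι => Disjoint (D p.1) (D p.2)).Nonempty := by
    push Not at hc
    obtain ⟨u, v, huv, hvu⟩ := hc
    exact ⟨(u, v), mem_filter.2 ⟨mem_univ _, ((hD.laminar u v).resolve_left huv).resolve_left hvu⟩⟩
  obtain ⟨⟨u, w⟩, huw, hmax⟩ := exists_max_image _ (fun p => #(D p.1) + #(D p.2)) hne
  simp only [mem_filter, mem_univ, true_and, Prod.forall] at huw hmax
  refine ⟨u, w, huw, fun t hut htw => ?_, fun t hwt htu => ?_⟩
  · have := hmax t w htw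
    exact (eq_of_subset_of_card_le hut (by omega)).ge
  · have := hmax u t htu.symm
    exact (eq_of_subset_of_card_le hwt (by omega)).ge

section Graft

variable [DecidableEq ι] {D : ι → Finset ι} {u w : ι}

/-- The subtree at `u` is moved below `w`. -/
def graft (D : ι → Finset ι) (u w : ι) : ι → Finset ι := update D w (D u ∪ D w)

lemma IsSiblingPair.laminar_union (hD : IsForest D) (h : IsSiblingPair D u w) (t : ι) :
    D t ⊆ D u ∪ D w ∨ D u ∪ D w ⊆ D t ∨ Disjoint (D t) (D u ∪ D w) := by
  rcases hD.laminar t u with htu | hut | htu <;> rcases hD.laminar t w with htw | hwt | htw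
  · exact .inl (htu.trans subset_union_left)
  · exact .inl (htu.trans subset_union_left)
  · exact .inl (htu.trans subset_union_left)
  · exact .inl (htw.trans subset_union_right)
  · exact .inr (.inl (union_subset hut hwt))
  · exact .inl ((h.2.1 t hut htw).trans subset_union_left)
  · exact .inl (htw.trans subset_union_right)
  · exact .inl ((h.2.2 t hwt htu).trans subset_union_right)
  · exact .inr (.inr (disjoint_union_right.2 ⟨htu, htw⟩))

lemma IsSiblingPair.not_mem_of_mem_union (hD : IsForest D) (h : IsSiblingPair D u w) {y : ι}
    (hyw : y ≠ w) (hy : y ∈ D u ∪ D w) : w ∉ D y := by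
  intro hwy
  rcases mem_union.1 hy with hy | hy
  · exact disjoint_left.1 h.1 (hD.subset_of_mem hy hwy) (hD.mem_self w)
  · exact hyw (hD.injective ((hD.subset_of_mem hy).antisymm (hD.subset_of_mem hwy)))

lemma IsSiblingPair.isForest_graft (hD : IsForest D) (h : IsSiblingPair D u w) :
    IsForest (graft D u w) where
  mem_self v := by
    by_cases hv : v = w
    · subst v
      simp [graft, hD.mem_self]
    · simpa [graft, hv] using hD.mem_self v
  subset_of_mem {x y} hxy := by
    by_cases hy : y = w <;> by_cases hx : x = w
    · rw [hx, hy]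
    · subst y
      simp only [graft, update_self, update_of_ne hx] at hxy ⊢
      rcases mem_union.1 hxy with hxy | hxy
      · exact (hD.subset_of_mem hxy).trans subset_union_left
      · exact (hD.subset_of_mem hxy).trans subset_union_right
    · subst x
      simp only [graft, update_self, update_of_ne hy] at hxy ⊢
      rcases h.laminar_union hD y with hyU | hUy | hdisj
      · exact absurd hxy (h.not_mem_of_mem_union hD hy (hyU (hD.mem_self y)))
      · exact hUy
      · exact absurd (mem_union_right _ (hD.mem_self w)) (disjoint_left.1 hdisj hxy)
    · simp only [graft, update_of_ne hx, update_of_ne hy] at hxy ⊢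
      exact hD.subset_of_mem hxy
  laminar x y := by
    by_cases hy : y = w <;> by_cases hx : x = w
    · rw [hx, hy]
      exact .inl subset_rfl
    · subst y
      simp only [graft, update_self, update_of_ne hx]
      exact h.laminar_union hD x
    · subst x
      simp only [graft, update_self, update_of_ne hy]
      rcases h.laminar_union hD y with h' | h' | h'
      · exact .inr (.inl h')
      · exact .inl h'
      · exact .inr (.inr h'.symm)
    · simp only [graft, update_of_ne hx, update_of_ne hy]
      exact hD.laminar x y
  injective x y hxy := by
    by_contra hne
    wlog hx : x = w generalizing x y
    · by_cases hy : y = w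
      · exact this y x hxy.symm (Ne.symm hne) hy
      · simp only [graft, update_of_ne hx, update_of_ne hy] at hxy
        exact hne (hD.injective hxy)
    subst x
    have hy : y ≠ w := Ne.symm hne
    simp only [graft, update_self, update_of_ne hy] at hxy
    exact h.not_mem_of_mem_union hD hy (hxy ▸ hD.mem_self y)
      (hxy ▸ mem_union_right _ (hD.mem_self w))

lemma IsSiblingPair.lt_graft (hD : IsForest D) (h : IsSiblingPair D u w) : D < graft D u w :=
  lt_update_self_iff.2 <| (ssubset_iff_of_subset subset_union_right).2
    ⟨u, mem_union_left _ (hD.mem_self u), disjoint_left.1 h.1 (hD.mem_self u)⟩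

end Graft

section PartialFractionStep

variable [DecidableEq ι] {D : ι → Finset ι} {k : ι → ℕ} {s : ℕ} {u w : ι}

def moveExp (k : ι → ℕ) (u w : ι) (i : ℕ) : ι → ℕ := update (update k u (k u - i)) w (k w + i)

lemma sum_moveExp [Fintype ι] (huw : u ≠ w) {i : ℕ} (hi : i ≤ k u) :
    ∑ v, moveExp k u w i v = ∑ v, k v := by
  rw [← sum_add_sum_compl {u, w}, ← sum_add_sum_compl {u, w} k, sum_pair huw, sum_pair huw]
  have hrest : ∑ v ∈ {u, w}ᶜ, moveExp k u w i v = ∑ v ∈ {u, w}ᶜ, k v :=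
    sum_congr rfl fun v hv => by
      simp only [mem_compl, mem_insert, mem_singleton, not_or] at hv
      simp [moveExp, hv.1, hv.2]
  rw [hrest]
  simp only [moveExp, update_self, update_of_ne huw]
  omega

lemma one_le_moveExp (hk : ∀ v, 1 ≤ k v) {i : ℕ} (hi : i < k u) (v : ι) :
    1 ≤ moveExp k u w i v := by
  have := hk v
  have := hk w
  simp only [moveExp, update_apply]
  split_ifs <;> omega

lemma forestTerm_eq_of_ne [Fintype ι] (huw : u ≠ w) (x : ι → ℕ) :
    forestTerm D k s x = (blockSum x (D u) ^ k u * blockSum x (D w) ^ k w)⁻¹ *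
      ((∏ v ∈ {u, w}ᶜ, blockSum x (D v) ^ k v) * blockSum x univ ^ s)⁻¹ := by
  rw [forestTerm, ← prod_mul_prod_compl {u, w}, prod_pair huw, mul_assoc, mul_inv]

lemma forestTerm_graft_moveExp [Fintype ι] (huw : u ≠ w) (hd : Disjoint (D u) (D w)) (i : ℕ)
    (x : ι → ℕ) :
    forestTerm (graft D u w) (moveExp k u w i) s x =
      (blockSum x (D u) ^ (k u - i) * (blockSum x (D u) + blockSum x (D w)) ^ (k w + i))⁻¹ *
      ((∏ v ∈ {u, w}ᶜ, blockSum x (D v) ^ k v) * blockSum x univ ^ s)⁻¹ := by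
  have hrest : ∏ v ∈ {u, w}ᶜ, blockSum x (graft D u w v) ^ moveExp k u w i v =
      ∏ v ∈ {u, w}ᶜ, blockSum x (D v) ^ k v :=
    prod_congr rfl fun v hv => by
      simp only [mem_compl, mem_insert, mem_singleton, not_or] at hv
      simp [graft, moveExp, hv.1, hv.2]
  rw [forestTerm_eq_of_ne huw, hrest]
  simp [graft, moveExp, update_of_ne huw, blockSum_union x hd]

lemma forestTerm_eq_sum_graft [Fintype ι] (hd : Disjoint (D u) (D w)) (hu : u ∈ D u) (hw : w ∈ D w)
    (hk : 1 ≤ k u) (x : ι → ℕ) :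
    forestTerm D k s x =
      ∑ i ∈ range (k u),
          ((k w).multichoose i : ℝ) * forestTerm (graft D u w) (moveExp k u w i) s x +
        ∑ i ∈ range (k w),
          ((k u).multichoose i : ℝ) * forestTerm (graft D w u) (moveExp k w u i) s x := by
  have huw : u ≠ w := fun h => disjoint_left.1 hd hu (h ▸ hw)
  have hm : 0 < blockSum x (D u) := zero_lt_one.trans_le (one_le_blockSum x hu)
  have hn : 0 < blockSum x (D w) := zero_lt_one.trans_le (one_le_blockSum x hw)
  rw [forestTerm_eq_of_ne huw, inv_pow_mul_pow_eq_eulerPart_add hm.ne' hn.ne' (by positivity)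
    (by omega), add_mul, eulerPart, eulerPart, sum_mul, sum_mul]
  simp only [forestTerm_graft_moveExp huw hd, forestTerm_graft_moveExp huw.symm hd.symm,
    pair_comm w u, add_comm (blockSum x (D w)) (blockSum x (D u)), mul_assoc]

end PartialFractionStep

lemma tsum_forestTerm_eq_sum_graft [Fintype ι] [DecidableEq ι] [Nonempty ι] {D : ι → Finset ι}
    (hD : IsForest D) {u w : ι} (h : IsSiblingPair D u w) {k : ι → ℕ} (hk : ∀ v, 1 ≤ k v)
    {s : ℕ} (hs : 1 ≤ s) :
    ∑' x, forestTerm D k s x =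
      ∑ i ∈ range (k u), ((k w).multichoose i : ℝ) *
        ∑' x, forestTerm (graft D u w) (moveExp k u w i) s x +
      ∑ i ∈ range (k w), ((k u).multichoose i : ℝ) *
        ∑' x, forestTerm (graft D w u) (moveExp k w u i) s x := by
  have hsummable : ∀ {u w : ι}, IsSiblingPair D u w → ∀ i ∈ range (k u),
      Summable fun x =>
        ((k w).multichoose i : ℝ) * forestTerm (graft D u w) (moveExp k u w i) s x :=
    fun h i hi => (summable_forestTerm (h.isForest_graft hD).mem_self
      (one_le_moveExp hk (mem_range.1 hi)) hs).mul_left _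
  rw [tsum_congr (forestTerm_eq_sum_graft h.1 (hD.mem_self u) (hD.mem_self w) (hk u)),
    (summable_sum (hsummable h)).tsum_add (summable_sum (hsummable h.symm)),
    Summable.tsum_finsetSum (hsummable h), Summable.tsum_finsetSum (hsummable h.symm)]
  simp only [tsum_mul_left]

lemma IsForest.mem_iff_card_le_card {D : ι → Finset ι} (hD : IsForest D)
    (hc : ∀ u v, D u ⊆ D v ∨ D v ⊆ D u) {v w : ι} : w ∈ D v ↔ #(D w) ≤ #(D v) := by
  refine ⟨fun h => card_le_card (hD.subset_of_mem h), fun h => ?_⟩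
  rcases hc w v with hwv | hvw
  · exact hwv (hD.mem_self w)
  · rw [eq_of_subset_of_card_le hvw h]
    exact hD.mem_self w

lemma IsForest.exists_equiv_of_chain {r : ℕ} {D : Fin r → Finset (Fin r)} (hD : IsForest D)
    (hc : ∀ u v, D u ⊆ D v ∨ D v ⊆ D u) :
    ∃ e : Fin r ≃ Fin r, ∀ i, D (e i) = (Ici i).map e.toEmbedding := by
  have hcard (v : Fin r) : #(D v) ≠ 0 ∧ #(D v) ≤ r :=
    ⟨card_ne_zero_of_mem (hD.mem_self v), card_le_univ (D v) |>.trans (by simp)⟩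
  let g (v : Fin r) : Fin r := ⟨r - #(D v), by have := hcard v; have := v.2; omega⟩
  have hg : Injective g := fun v w hvw => by
    have := hcard v
    have := hcard w
    have hvw : #(D v) = #(D w) := by simp only [g, Fin.mk.injEq] at hvw; omega
    exact hD.injective (hD.subset_of_mem ((hD.mem_iff_card_le_card hc).2 hvw.le) |>.antisymm
      (hD.subset_of_mem ((hD.mem_iff_card_le_card hc).2 hvw.ge)))
  let e := (Equiv.ofBijective g hg.bijective_of_finite).symm
  refine ⟨e, fun i => ?_⟩
  have hi : (g (e i)).val = i.val := congrArg Fin.val (e.symm_apply_apply i)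
  ext w
  rw [mem_map_equiv, mem_Ici, hD.mem_iff_card_le_card hc, Fin.le_def]
  have := hcard w
  have := hcard (e i)
  simp only [g, e, Equiv.symm_symm, Equiv.ofBijective_apply] at hi ⊢
  omega

lemma tsum_forestTerm_eq_MZV {r : ℕ} (hr : 0 < r) (D : Fin r → Finset (Fin r)) (k : Fin r → ℕ)
    (s : ℕ) (e : Fin r ≃ Fin r) (he : ∀ i, D (e i) = (Ici i).map e.toEmbedding) :
    ∑' x, forestTerm D k s x = MZV r fun i => k (e i) + if i = ⟨0, hr⟩ then s else 0 := by
  rw [MZV, ← (e.arrowCongr (Equiv.refl ℕ)).tsum_eq]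
  refine tsum_congr fun a => ?_
  have hblock (i : Fin r) : blockSum (e.arrowCongr (Equiv.refl ℕ) a) (D (e i)) =
      ∑ j ∈ Ici i, ((a j : ℝ) + 1) := by
    simp [blockSum, he]
  have huniv : blockSum (e.arrowCongr (Equiv.refl ℕ) a) univ =
      ∑ j ∈ Ici ⟨0, hr⟩, ((a j : ℝ) + 1) := by
    rw [← hblock, he]
    congr
    ext
    simp [Fin.le_def]
  rw [forestTerm, ← e.prod_comp, huniv, prod_inv_distrib]
  simp only [hblock, pow_add, prod_mul_distrib, pow_ite, pow_zero, prod_ite_eq', mem_univ, if_true]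

end Forests

def mzvSpan (r : ℕ) (hr : 0 < r) (w : ℕ) : Submodule ℤ ℝ :=
  Submodule.span ℤ (MZV r '' {k | 2 ≤ k ⟨0, hr⟩ ∧ (∀ i, 1 ≤ k i) ∧ ∑ i, k i = w})

theorem tsum_forestTerm_mem_mzvSpan {r : ℕ} (hr : 0 < r) {s : ℕ} (hs : 1 ≤ s)
    {D : Fin r → Finset (Fin r)} (hD : IsForest D) {k : Fin r → ℕ} (hk : ∀ v, 1 ≤ k v) :
    ∑' x, forestTerm D k s x ∈ mzvSpan r hr (s + ∑ v, k v) := by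
  have : Nonempty (Fin r) := ⟨⟨0, hr⟩⟩
  -- `<` is well-founded on the finite type `Fin r → Finset (Fin r)`
  induction D using WellFoundedGT.induction generalizing k with
  | _ D ih =>
  by_cases hc : ∀ u v, D u ⊆ D v ∨ D v ⊆ D u
  · obtain ⟨e, he⟩ := hD.exists_equiv_of_chain hc
    rw [tsum_forestTerm_eq_MZV hr D k s e he]
    refine Submodule.subset_span ⟨_, ⟨?_, fun i => ?_, ?_⟩, rfl⟩
    · simp only [if_true]
      have := hk (e ⟨0, hr⟩)
      omega
    · have := hk (e i)
      split_ifs <;> omega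
    · rw [sum_add_distrib, e.sum_comp, sum_ite_eq', if_pos (mem_univ _), add_comm]
  · obtain ⟨u, w, h⟩ := hD.exists_isSiblingPair hc
    have hpiece : ∀ {u w : Fin r}, IsSiblingPair D u w → ∀ i ∈ range (k u), ∀ c : ℕ,
        (c : ℝ) * ∑' x, forestTerm (graft D u w) (moveExp k u w i) s x ∈
          mzvSpan r hr (s + ∑ v, k v) := by
      intro u w h i hi c
      rw [← nsmul_eq_mul, ← sum_moveExp (k := k) (w := w) (h.ne hD) (mem_range.1 hi).le]
      exact nsmul_mem
        (ih _ (h.lt_graft hD) (h.isForest_graft hD) (one_le_moveExp hk (mem_range.1 hi))) c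
    rw [tsum_forestTerm_eq_sum_graft hD h hk hs]
    exact add_mem (sum_mem fun i hi => hpiece h i hi _) (sum_mem fun i hi => hpiece h.symm i hi _)

lemma MTterm_eq_forestTerm (r : ℕ) (s' : Fin r → ℕ) (s : ℕ) :
    MTterm r s' s = forestTerm (fun v => {v}) s' s := by
  ext n
  simp [MTterm, forestTerm, blockSum]

theorem stmt4_general (r : ℕ) (hr : 1 ≤ r) (s : ℕ) (hs : 1 ≤ s)
    (s' : Fin r → ℕ) (hs1 : ∀ i, 1 ≤ s' i) :
    Summable (MTterm r s' s) ∧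
    ∃ (S : Finset (Fin r → ℕ)) (c : (Fin r → ℕ) → ℤ),
      (∀ k ∈ S, 2 ≤ k ⟨0, hr⟩ ∧ (∀ i, 1 ≤ k i) ∧ ∑ i, k i = s + ∑ i, s' i) ∧
      (∑' n, MTterm r s' s n) = ∑ k ∈ S, (c k : ℝ) * MZV r k := by
  have hMT := MTterm_eq_forestTerm r s' s
  have : Nonempty (Fin r) := ⟨⟨0, hr⟩⟩
  refine ⟨hMT ▸ summable_forestTerm mem_singleton_self hs1 hs, ?_⟩
  obtain ⟨l, hl, hsum⟩ := (Finsupp.mem_span_image_iff_linearCombination ℤ).1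
    (hMT ▸ tsum_forestTerm_mem_mzvSpan hr hs isForest_singleton hs1)
  refine ⟨l.support, l, fun k hk => hl hk, ?_⟩
  rw [← hsum, Finsupp.linearCombination_apply, Finsupp.sum]
  simp [zsmul_eq_mul]

/-- for `s ≥ 1` and `1 ≤ s_1 ≤ ⋯ ≤ s_r`, the Mordell–Tornheim
series converges and is a `ℤ`-linear combination of MZVs of weight
`s + s_1 + ⋯ + s_r` and depth `r`. -/
theorem stmt4 (r : ℕ) (hr : 1 ≤ r) (s : ℕ) (hs : 1 ≤ s)
    (s' : Fin r → ℕ) (hs1 : ∀ i, 1 ≤ s' i) (hmono : Monotone s') :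
    Summable (MTterm r s' s) ∧
    ∃ (S : Finset (Fin r → ℕ)) (c : (Fin r → ℕ) → ℤ),
      (∀ k ∈ S, 2 ≤ k ⟨0, hr⟩ ∧ (∀ i, 1 ≤ k i) ∧ ∑ i, k i = s + ∑ i, s' i) ∧
      (∑' n, MTterm r s' s n) = ∑ k ∈ S, (c k : ℝ) * MZV r k :=
  stmt4_general r hr s hs s' hs1
end

section
/- The triple sum ∑_{p,q,r ≥ 1} 1/((p+q+r)^2 · q · r) converges and equals 2ζ(2,1,1), where ζ(2,1,1) = ∑_{m_1 > m_2 > m_3 ≥ 1} 1/(m_1^2 m_2 m_3). -/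
open Real

noncomputable def stmt5f (n : ℕ × ℕ × ℕ) : ℝ :=
  (1 : ℝ) / (((n.1 : ℝ) + (n.2.1 : ℝ) + (n.2.2 : ℝ) + 3) ^ 2 *
    ((n.2.1 : ℝ) + 1) * ((n.2.2 : ℝ) + 1))

noncomputable def stmt5g (m : ℕ × ℕ × ℕ) : ℝ :=
  (1 : ℝ) / (((m.1 : ℝ) + (m.2.1 : ℝ) + (m.2.2 : ℝ) + 3) ^ 2 *
    ((m.2.1 : ℝ) + (m.2.2 : ℝ) + 2) * ((m.2.2 : ℝ) + 1))

def stmt5e : (ℕ × ℕ × ℕ) ≃ (ℕ × ℕ × ℕ) :=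
  (Equiv.refl ℕ).prodCongr (Equiv.prodComm ℕ ℕ)

lemma stmt5_pseries (p : ℝ) (hp : 1 < p) :
    Summable (fun a : ℕ => 1 / ((a : ℝ) + 1) ^ p) := by
  have h := Real.summable_one_div_nat_rpow.mpr hp
  have h2 := (summable_nat_add_iff 1).mpr h
  refine h2.congr fun a => ?_
  push_cast
  ring_nf

lemma stmt5f_summable : Summable stmt5f := by
  have h6 := stmt5_pseries (6/5) (by norm_num)
  have h7 := stmt5_pseries (7/5) (by norm_num)
  have hprod : Summable (fun n : ℕ × ℕ × ℕ =>
      (1 / ((n.1 : ℝ) + 1) ^ (6/5 : ℝ)) *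
      ((1 / ((n.2.1 : ℝ) + 1) ^ (7/5 : ℝ)) * (1 / ((n.2.2 : ℝ) + 1) ^ (7/5 : ℝ)))) := by
    have hnn7 : ∀ a : ℕ, (0:ℝ) ≤ 1 / ((a : ℝ) + 1) ^ (7/5 : ℝ) := fun a => by positivity
    have hnn6 : ∀ a : ℕ, (0:ℝ) ≤ 1 / ((a : ℝ) + 1) ^ (6/5 : ℝ) := fun a => by positivity
    have hbc := h7.mul_of_nonneg h7 hnn7 hnn7
    have hbc' : Summable (fun m : ℕ × ℕ =>
        (1 / ((m.1 : ℝ) + 1) ^ (7/5 : ℝ)) * (1 / ((m.2 : ℝ) + 1) ^ (7/5 : ℝ))) :=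
      hbc.congr fun m => rfl
    have hnnbc : ∀ m : ℕ × ℕ, (0:ℝ) ≤
        (1 / ((m.1 : ℝ) + 1) ^ (7/5 : ℝ)) * (1 / ((m.2 : ℝ) + 1) ^ (7/5 : ℝ)) :=
      fun m => by positivity
    have H := h6.mul_of_nonneg hbc' hnn6 hnnbc
    exact H.congr fun n => rfl
  refine Summable.of_nonneg_of_le (fun n => by unfold stmt5f; positivity) (fun n => ?_) hprod
  obtain ⟨a, b, c⟩ := n
  unfold stmt5f
  simp only
  set A : ℝ := (a : ℝ) + 1 with hA
  set B : ℝ := (b : ℝ) + 1 with hB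
  set C : ℝ := (c : ℝ) + 1 with hC
  have hA1 : (1:ℝ) ≤ A := by rw [hA]; have := (Nat.cast_nonneg a : (0:ℝ) ≤ a); linarith
  have hB1 : (1:ℝ) ≤ B := by rw [hB]; have := (Nat.cast_nonneg b : (0:ℝ) ≤ b); linarith
  have hC1 : (1:ℝ) ≤ C := by rw [hC]; have := (Nat.cast_nonneg c : (0:ℝ) ≤ c); linarith
  have hA0 : (0:ℝ) ≤ A := by linarith
  have hB0 : (0:ℝ) ≤ B := by linarith
  have hC0 : (0:ℝ) ≤ C := by linarith
  have hN : (a : ℝ) + b + c + 3 = A + B + C := by rw [hA, hB, hC]; ring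
  rw [hN]
  set N : ℝ := A + B + C with hNdef
  have hN0 : (0:ℝ) < N := by rw [hNdef]; linarith
  have hAle : A ^ (6/5 : ℝ) ≤ N ^ (6/5 : ℝ) :=
    Real.rpow_le_rpow hA0 (by rw [hNdef]; linarith) (by norm_num)
  have hBle : B ^ (2/5 : ℝ) ≤ N ^ (2/5 : ℝ) :=
    Real.rpow_le_rpow hB0 (by rw [hNdef]; linarith) (by norm_num)
  have hCle : C ^ (2/5 : ℝ) ≤ N ^ (2/5 : ℝ) :=
    Real.rpow_le_rpow hC0 (by rw [hNdef]; linarith) (by norm_num)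
  have hsplit : N ^ (2:ℕ) = N ^ (6/5 : ℝ) * N ^ (2/5 : ℝ) * N ^ (2/5 : ℝ) := by
    rw [← Real.rpow_natCast N 2, ← Real.rpow_add hN0, ← Real.rpow_add hN0]
    norm_num
  have hkey : A ^ (6/5 : ℝ) * B ^ (2/5 : ℝ) * C ^ (2/5 : ℝ) ≤ N ^ 2 := by
    rw [hsplit]
    exact mul_le_mul (mul_le_mul hAle hBle (by positivity) (by positivity)) hCle
      (by positivity) (by positivity)
  have hBsplit : B ^ (7/5 : ℝ) = B ^ (2/5 : ℝ) * B := by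
    nth_rewrite 3 [← Real.rpow_one B]
    rw [← Real.rpow_add (by linarith)]
    norm_num
  have hCsplit : C ^ (7/5 : ℝ) = C ^ (2/5 : ℝ) * C := by
    nth_rewrite 3 [← Real.rpow_one C]
    rw [← Real.rpow_add (by linarith)]
    norm_num
  have hdenom : A ^ (6/5 : ℝ) * (B ^ (7/5 : ℝ) * C ^ (7/5 : ℝ)) ≤ N ^ 2 * B * C := by
    have h := mul_le_mul_of_nonneg_right (mul_le_mul_of_nonneg_right hkey hB0) hC0
    have e : A ^ (6/5 : ℝ) * (B ^ (7/5 : ℝ) * C ^ (7/5 : ℝ))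
        = A ^ (6/5 : ℝ) * B ^ (2/5 : ℝ) * C ^ (2/5 : ℝ) * B * C := by
      rw [hBsplit, hCsplit]; ring
    rw [e]
    exact h
  have hrhs : (1:ℝ) / A ^ (6/5 : ℝ) * (1 / B ^ (7/5 : ℝ) * (1 / C ^ (7/5 : ℝ)))
      = 1 / (A ^ (6/5 : ℝ) * (B ^ (7/5 : ℝ) * C ^ (7/5 : ℝ))) := by
    rw [div_mul_div_comm, div_mul_div_comm, one_mul, one_mul]
  rw [hrhs]
  exact one_div_le_one_div_of_le (by positivity) hdenom

lemma stmt5g_summable : Summable stmt5g := by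
  refine Summable.of_nonneg_of_le (fun m => by unfold stmt5g; positivity)
    (fun m => ?_) stmt5f_summable
  obtain ⟨a, b, c⟩ := m
  unfold stmt5f stmt5g
  simp only
  apply one_div_le_one_div_of_le (by positivity)
  have h1 : (0:ℝ) ≤ ((a:ℝ) + b + c + 3) ^ 2 := by positivity
  have h2 : (0:ℝ) ≤ (c:ℝ) + 1 := by positivity
  have hc : (0:ℝ) ≤ (c:ℝ) := Nat.cast_nonneg c
  apply mul_le_mul_of_nonneg_right _ h2
  apply mul_le_mul_of_nonneg_left _ h1
  linarith

lemma stmt5_pointwise (n : ℕ × ℕ × ℕ) :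
    stmt5f n = stmt5g n + stmt5g (stmt5e n) := by
  obtain ⟨a, b, c⟩ := n
  unfold stmt5f stmt5g stmt5e
  simp only [Equiv.prodCongr_apply, Equiv.coe_refl, Prod.map, id, Equiv.prodComm_apply,
    Prod.swap]
  have h1 : ((a:ℝ) + b + c + 3) > 0 := by positivity
  have h2 : ((b:ℝ) + c + 2) > 0 := by positivity
  have h3 : ((c:ℝ) + 1) > 0 := by positivity
  have h4 : ((b:ℝ) + 1) > 0 := by positivity
  have h5 : ((a:ℝ) + c + b + 3) > 0 := by positivity
  have h6 : ((c:ℝ) + b + 2) > 0 := by positivity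
  field_simp
  ring

/-- `∑_{p,q,r≥1} 1/((p+q+r)^2 q r)` converges and equals
`2ζ(2,1,1)`, with `ζ(2,1,1) = ∑_{m₁>m₂>m₃≥1} 1/(m₁² m₂ m₃)` parametrised by
`m₃ = c+1`, `m₂ = b+c+2`, `m₁ = a+b+c+3`. -/
theorem stmt5 :
    Summable (fun n : ℕ × ℕ × ℕ =>
      (1 : ℝ) / (((n.1 : ℝ) + (n.2.1 : ℝ) + (n.2.2 : ℝ) + 3) ^ 2 *
        ((n.2.1 : ℝ) + 1) * ((n.2.2 : ℝ) + 1))) ∧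
    (∑' n : ℕ × ℕ × ℕ,
      (1 : ℝ) / (((n.1 : ℝ) + (n.2.1 : ℝ) + (n.2.2 : ℝ) + 3) ^ 2 *
        ((n.2.1 : ℝ) + 1) * ((n.2.2 : ℝ) + 1)))
    = 2 * ∑' m : ℕ × ℕ × ℕ,
      (1 : ℝ) / (((m.1 : ℝ) + (m.2.1 : ℝ) + (m.2.2 : ℝ) + 3) ^ 2 *
        ((m.2.1 : ℝ) + (m.2.2 : ℝ) + 2) * ((m.2.2 : ℝ) + 1)) := by
  have hf : Summable stmt5f := stmt5f_summable
  have hg : Summable stmt5g := stmt5g_summable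
  have hge : Summable (fun n => stmt5g (stmt5e n)) := stmt5e.summable_iff.mpr hg
  constructor
  · exact hf
  · have h1 : (∑' n, stmt5f n) = (∑' n, stmt5g n) + (∑' n, stmt5g (stmt5e n)) := by
      rw [← Summable.tsum_add hg hge]
      exact tsum_congr stmt5_pointwise
    have h2 : (∑' n, stmt5g (stmt5e n)) = ∑' n, stmt5g n := stmt5e.tsum_eq stmt5g
    have h3 : (∑' n : ℕ × ℕ × ℕ,
      (1 : ℝ) / (((n.1 : ℝ) + (n.2.1 : ℝ) + (n.2.2 : ℝ) + 3) ^ 2 *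
        ((n.2.1 : ℝ) + 1) * ((n.2.2 : ℝ) + 1))) = ∑' n, stmt5f n := rfl
    have h4 : (∑' m : ℕ × ℕ × ℕ,
      (1 : ℝ) / (((m.1 : ℝ) + (m.2.1 : ℝ) + (m.2.2 : ℝ) + 3) ^ 2 *
        ((m.2.1 : ℝ) + (m.2.2 : ℝ) + 2) * ((m.2.2 : ℝ) + 1))) = ∑' n, stmt5g n := rfl
    rw [h3, h1, h2, h4]
    ring
end

section
/- The quintuple sum ∑_{p,q,r,s,t ≥ 1} 1/((p+q+r+s+t)^4 (q+t)^2 r s t) converges and equals 2ζ(4,1,1,2,1) + 6ζ(4,1,2,1,1) + 12ζ(4,2,1,1,1). -/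
set_option maxHeartbeats 1000000

/-- The depth-5 multiple zeta value `ζ(k₀,…,k₄) = ∑_{m₀>⋯>m₄≥1} ∏ m_i^{-k_i}`,
parametrised by `m i = ∑_{j ≥ i} (a j + 1)`. -/
noncomputable def mzv5 (k : Fin 5 → ℕ) : ℝ :=
  ∑' a : Fin 5 → ℕ, ∏ i, ((∑ j ∈ Finset.Ici i, ((a j : ℝ) + 1)) ^ k i)⁻¹


namespace Stmt14aux

noncomputable section

abbrev J := Fin 5 → ℕ

def x (v : J) (i : Fin 5) : ℝ := (v i : ℝ) + 1

def S (v : J) : ℝ := x v 0 + x v 1 + x v 2 + x v 3 + x v 4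
def U (v : J) : ℝ := x v 1 + x v 2 + x v 3 + x v 4
def Z (v : J) : ℝ := x v 1 + x v 2 + x v 4
def Q (v : J) : ℝ := x v 1 + x v 4
def W (v : J) : ℝ := x v 2 + x v 3
def Y (v : J) : ℝ := x v 2 + x v 4
def M2 (v : J) : ℝ := x v 2 + x v 3 + x v 4
def M3 (v : J) : ℝ := x v 3 + x v 4

def f0 (v : J) : ℝ := (S v ^ 4)⁻¹ * (Q v ^ 2)⁻¹ * (x v 2)⁻¹ * (x v 3)⁻¹ * (x v 4)⁻¹
def gA (v : J) : ℝ := (S v ^ 4)⁻¹ * (Q v ^ 2)⁻¹ * (W v)⁻¹ * (x v 2)⁻¹ * (x v 4)⁻¹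
def gB (v : J) : ℝ := (S v ^ 4)⁻¹ * (Q v ^ 2)⁻¹ * (W v)⁻¹ * (x v 3)⁻¹ * (x v 4)⁻¹
def h2 (v : J) : ℝ := (S v ^ 4)⁻¹ * (U v)⁻¹ * (Q v ^ 2)⁻¹ * (x v 2)⁻¹ * (x v 4)⁻¹
def h3 (v : J) : ℝ := (S v ^ 4)⁻¹ * (U v ^ 2)⁻¹ * (Q v)⁻¹ * (x v 2)⁻¹ * (x v 4)⁻¹
def h4 (v : J) : ℝ := (S v ^ 4)⁻¹ * (U v ^ 2)⁻¹ * (W v)⁻¹ * (x v 2)⁻¹ * (x v 4)⁻¹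
def kA (v : J) : ℝ := (S v ^ 4)⁻¹ * (U v)⁻¹ * (Z v)⁻¹ * (Q v ^ 2)⁻¹ * (x v 4)⁻¹
def kB (v : J) : ℝ := (S v ^ 4)⁻¹ * (U v)⁻¹ * (Z v ^ 2)⁻¹ * (Q v)⁻¹ * (x v 4)⁻¹
def kc (v : J) : ℝ := (S v ^ 4)⁻¹ * (U v)⁻¹ * (Z v ^ 2)⁻¹ * (x v 2)⁻¹ * (x v 4)⁻¹
def l1 (v : J) : ℝ := (S v ^ 4)⁻¹ * (U v)⁻¹ * (Z v ^ 2)⁻¹ * (Y v)⁻¹ * (x v 2)⁻¹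
def l2 (v : J) : ℝ := (S v ^ 4)⁻¹ * (U v)⁻¹ * (Z v ^ 2)⁻¹ * (Y v)⁻¹ * (x v 4)⁻¹
def n1 (v : J) : ℝ := (S v ^ 4)⁻¹ * (U v ^ 2)⁻¹ * (Z v)⁻¹ * (Q v)⁻¹ * (x v 4)⁻¹
def n2 (v : J) : ℝ := (S v ^ 4)⁻¹ * (U v ^ 2)⁻¹ * (Z v)⁻¹ * (x v 2)⁻¹ * (x v 4)⁻¹
def o1 (v : J) : ℝ := (S v ^ 4)⁻¹ * (U v ^ 2)⁻¹ * (Z v)⁻¹ * (Y v)⁻¹ * (x v 2)⁻¹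
def o2 (v : J) : ℝ := (S v ^ 4)⁻¹ * (U v ^ 2)⁻¹ * (Z v)⁻¹ * (Y v)⁻¹ * (x v 4)⁻¹
def mA (v : J) : ℝ := (S v ^ 4)⁻¹ * (U v)⁻¹ * (M2 v)⁻¹ * (M3 v ^ 2)⁻¹ * (x v 4)⁻¹
def mB (v : J) : ℝ := (S v ^ 4)⁻¹ * (U v)⁻¹ * (M2 v ^ 2)⁻¹ * (M3 v)⁻¹ * (x v 4)⁻¹
def mC (v : J) : ℝ := (S v ^ 4)⁻¹ * (U v ^ 2)⁻¹ * (M2 v)⁻¹ * (M3 v)⁻¹ * (x v 4)⁻¹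

lemma split2 {a b : ℝ} (ha : 0 < a) (hb : 0 < b) :
    a⁻¹ * b⁻¹ = (a + b)⁻¹ * a⁻¹ + (a + b)⁻¹ * b⁻¹ := by
  have hab : a + b ≠ 0 := by positivity
  field_simp
  ring

lemma split3 {a b : ℝ} (ha : 0 < a) (hb : 0 < b) :
    (a ^ 2)⁻¹ * b⁻¹ =
      (a + b)⁻¹ * (a ^ 2)⁻¹ + ((a + b) ^ 2)⁻¹ * a⁻¹ + ((a + b) ^ 2)⁻¹ * b⁻¹ := by
  have hab : a + b ≠ 0 := by positivity
  field_simp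
  ring

lemma xpos (v : J) (i : Fin 5) : 0 < x v i := by unfold x; positivity
lemma Spos (v : J) : 0 < S v := by unfold S x; positivity
lemma Upos (v : J) : 0 < U v := by unfold U x; positivity
lemma Zpos (v : J) : 0 < Z v := by unfold Z x; positivity
lemma Qpos (v : J) : 0 < Q v := by unfold Q x; positivity
lemma Wpos (v : J) : 0 < W v := by unfold W x; positivity
lemma Ypos (v : J) : 0 < Y v := by unfold Y x; positivity

-- splits
lemma f0_split (v : J) : f0 v = gA v + gB v := by
  have h := split2 (xpos v 2) (xpos v 3)
  have : f0 v = (S v ^ 4)⁻¹ * (Q v ^ 2)⁻¹ * (x v 4)⁻¹ * ((x v 2)⁻¹ * (x v 3)⁻¹) := by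
    unfold f0; ring
  rw [this, h]
  unfold gA gB W
  ring

lemma gA_split (v : J) : gA v = h2 v + h3 v + h4 v := by
  have h := split3 (Qpos v) (Wpos v)
  have e : gA v = (S v ^ 4)⁻¹ * (x v 2)⁻¹ * (x v 4)⁻¹ * ((Q v ^ 2)⁻¹ * (W v)⁻¹) := by
    unfold gA; ring
  rw [e, h]
  unfold h2 h3 h4 U Q W
  ring

lemma h2_split (v : J) : h2 v = kA v + kB v + kc v := by
  have h := split3 (Qpos v) (xpos v 2)
  have e : h2 v = (S v ^ 4)⁻¹ * (U v)⁻¹ * (x v 4)⁻¹ * ((Q v ^ 2)⁻¹ * (x v 2)⁻¹) := by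
    unfold h2; ring
  rw [e, h]
  unfold kA kB kc Z Q
  ring

lemma kc_split (v : J) : kc v = l1 v + l2 v := by
  have h := split2 (xpos v 2) (xpos v 4)
  have e : kc v = (S v ^ 4)⁻¹ * (U v)⁻¹ * (Z v ^ 2)⁻¹ * ((x v 2)⁻¹ * (x v 4)⁻¹) := by
    unfold kc; ring
  rw [e, h]
  unfold l1 l2 Y
  ring

lemma h3_split (v : J) : h3 v = n1 v + n2 v := by
  have h := split2 (Qpos v) (xpos v 2)
  have e : h3 v = (S v ^ 4)⁻¹ * (U v ^ 2)⁻¹ * (x v 4)⁻¹ * ((Q v)⁻¹ * (x v 2)⁻¹) := by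
    unfold h3; ring
  rw [e, h]
  unfold n1 n2 Z Q
  ring

lemma n2_split (v : J) : n2 v = o1 v + o2 v := by
  have h := split2 (xpos v 2) (xpos v 4)
  have e : n2 v = (S v ^ 4)⁻¹ * (U v ^ 2)⁻¹ * (Z v)⁻¹ * ((x v 2)⁻¹ * (x v 4)⁻¹) := by
    unfold n2; ring
  rw [e, h]
  unfold o1 o2 Y
  ring


-- generic machinery
lemma split_summable2 {f g h : J → ℝ} (hf : Summable f)
    (heq : ∀ v, f v = g v + h v) (hg0 : ∀ v, 0 ≤ g v) (hh0 : ∀ v, 0 ≤ h v) :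
    Summable g ∧ Summable h := by
  constructor
  · refine hf.of_nonneg_of_le hg0 fun v => ?_
    rw [heq v]; exact le_add_of_nonneg_right (hh0 v)
  · refine hf.of_nonneg_of_le hh0 fun v => ?_
    rw [heq v]; exact le_add_of_nonneg_left (hg0 v)

lemma split_tsum2 {f g h : J → ℝ} (hf : Summable f)
    (heq : ∀ v, f v = g v + h v) (hg0 : ∀ v, 0 ≤ g v) (hh0 : ∀ v, 0 ≤ h v) :
    ∑' v, f v = ∑' v, g v + ∑' v, h v := by
  obtain ⟨hg, hh⟩ := split_summable2 hf heq hg0 hh0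
  rw [← Summable.tsum_add hg hh]
  exact tsum_congr heq

lemma split_summable3 {f g h k : J → ℝ} (hf : Summable f)
    (heq : ∀ v, f v = g v + h v + k v) (hg0 : ∀ v, 0 ≤ g v) (hh0 : ∀ v, 0 ≤ h v)
    (hk0 : ∀ v, 0 ≤ k v) : Summable g ∧ Summable h ∧ Summable k := by
  have h1 : Summable (fun v => g v + h v) ∧ Summable k :=
    split_summable2 hf heq (fun v => add_nonneg (hg0 v) (hh0 v)) hk0
  have h2 : Summable g ∧ Summable h := split_summable2 h1.1 (fun _ => rfl) hg0 hh0
  exact ⟨h2.1, h2.2, h1.2⟩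

lemma split_tsum3 {f g h k : J → ℝ} (hf : Summable f)
    (heq : ∀ v, f v = g v + h v + k v) (hg0 : ∀ v, 0 ≤ g v) (hh0 : ∀ v, 0 ≤ h v)
    (hk0 : ∀ v, 0 ≤ k v) :
    ∑' v, f v = ∑' v, g v + ∑' v, h v + ∑' v, k v := by
  obtain ⟨hg, hh, hk⟩ := split_summable3 hf heq hg0 hh0 hk0
  rw [← Summable.tsum_add hg hh, ← Summable.tsum_add (hg.add hh) hk]
  exact tsum_congr heq

def permJ (π : Equiv.Perm (Fin 5)) : J ≃ J := Equiv.piCongrLeft' (fun _ => ℕ) π.symm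

lemma reindex_tsum {f g : J → ℝ} (π : Equiv.Perm (Fin 5))
    (h : ∀ v, f v = g (fun i => v (π i))) : ∑' v, f v = ∑' v, g v := by
  have h1 : ∑' v, f v = ∑' v, g (permJ π v) := tsum_congr fun v => h v
  rw [h1]
  exact (permJ π).tsum_eq g

-- nonnegativity
lemma gA_nn (v : J) : 0 ≤ gA v := by simp only [gA, S, U, Z, Q, W, Y, x]; positivity
lemma gB_nn (v : J) : 0 ≤ gB v := by simp only [gB, S, U, Z, Q, W, Y, x]; positivity
lemma h2_nn (v : J) : 0 ≤ h2 v := by simp only [h2, S, U, Z, Q, W, Y, x]; positivity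
lemma h3_nn (v : J) : 0 ≤ h3 v := by simp only [h3, S, U, Z, Q, W, Y, x]; positivity
lemma h4_nn (v : J) : 0 ≤ h4 v := by simp only [h4, S, U, Z, Q, W, Y, x]; positivity
lemma kA_nn (v : J) : 0 ≤ kA v := by simp only [kA, S, U, Z, Q, W, Y, x]; positivity
lemma kB_nn (v : J) : 0 ≤ kB v := by simp only [kB, S, U, Z, Q, W, Y, x]; positivity
lemma kc_nn (v : J) : 0 ≤ kc v := by simp only [kc, S, U, Z, Q, W, Y, x]; positivity
lemma l1_nn (v : J) : 0 ≤ l1 v := by simp only [l1, S, U, Z, Q, W, Y, x]; positivity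
lemma l2_nn (v : J) : 0 ≤ l2 v := by simp only [l2, S, U, Z, Q, W, Y, x]; positivity
lemma n1_nn (v : J) : 0 ≤ n1 v := by simp only [n1, S, U, Z, Q, W, Y, x]; positivity
lemma n2_nn (v : J) : 0 ≤ n2 v := by simp only [n2, S, U, Z, Q, W, Y, x]; positivity
lemma o1_nn (v : J) : 0 ≤ o1 v := by simp only [o1, S, U, Z, Q, W, Y, x]; positivity
lemma o2_nn (v : J) : 0 ≤ o2 v := by simp only [o2, S, U, Z, Q, W, Y, x]; positivity

def σ23 : Equiv.Perm (Fin 5) := Equiv.swap 2 3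
def σ13 : Equiv.Perm (Fin 5) := Equiv.swap 1 3
def σ24 : Equiv.Perm (Fin 5) := Equiv.swap 2 4
def σ2 : Equiv.Perm (Fin 5) := Equiv.swap 1 3 * Equiv.swap 2 4
def c4 : Equiv.Perm (Fin 5) := ⟨![0, 2, 4, 1, 3], ![0, 3, 1, 4, 2], by decide, by decide⟩

lemma gB_eq (v : J) : gB v = gA (fun i => v (σ23 i)) := by
  have e0 : σ23 0 = 0 := by decide
  have e1 : σ23 1 = 1 := by decide
  have e2 : σ23 2 = 3 := by decide
  have e3 : σ23 3 = 2 := by decide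
  have e4 : σ23 4 = 4 := by decide
  simp only [gA, gB, S, Q, W, x, e0, e1, e2, e3, e4]
  ring

lemma h4_eq (v : J) : h4 v = h3 (fun i => v (σ2 i)) := by
  have e0 : σ2 0 = 0 := by decide
  have e1 : σ2 1 = 3 := by decide
  have e2 : σ2 2 = 4 := by decide
  have e3 : σ2 3 = 1 := by decide
  have e4 : σ2 4 = 2 := by decide
  simp only [h3, h4, S, U, Q, W, x, e0, e1, e2, e3, e4]
  ring

lemma mA_eq (v : J) : mA v = kA (fun i => v (σ13 i)) := by
  have e0 : σ13 0 = 0 := by decide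
  have e1 : σ13 1 = 3 := by decide
  have e2 : σ13 2 = 2 := by decide
  have e3 : σ13 3 = 1 := by decide
  have e4 : σ13 4 = 4 := by decide
  simp only [mA, kA, S, U, Z, Q, M2, M3, x, e0, e1, e2, e3, e4]
  ring

lemma mB_eq (v : J) : mB v = kB (fun i => v (σ13 i)) := by
  have e0 : σ13 0 = 0 := by decide
  have e1 : σ13 1 = 3 := by decide
  have e2 : σ13 2 = 2 := by decide
  have e3 : σ13 3 = 1 := by decide
  have e4 : σ13 4 = 4 := by decide
  simp only [mB, kB, S, U, Z, Q, M2, M3, x, e0, e1, e2, e3, e4]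
  ring

lemma l2_eq (v : J) : l2 v = l1 (fun i => v (σ24 i)) := by
  have e0 : σ24 0 = 0 := by decide
  have e1 : σ24 1 = 1 := by decide
  have e2 : σ24 2 = 4 := by decide
  have e3 : σ24 3 = 3 := by decide
  have e4 : σ24 4 = 2 := by decide
  simp only [l1, l2, S, U, Z, Y, x, e0, e1, e2, e3, e4]
  ring

lemma mB_eq' (v : J) : mB v = l1 (fun i => v (c4 i)) := by
  have e0 : c4 0 = 0 := by decide
  have e1 : c4 1 = 2 := by decide
  have e2 : c4 2 = 4 := by decide
  have e3 : c4 3 = 1 := by decide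
  have e4 : c4 4 = 3 := by decide
  simp only [mB, l1, S, U, Z, Y, M2, M3, x, e0, e1, e2, e3, e4]
  ring

lemma mC_eq (v : J) : mC v = n1 (fun i => v (σ13 i)) := by
  have e0 : σ13 0 = 0 := by decide
  have e1 : σ13 1 = 3 := by decide
  have e2 : σ13 2 = 2 := by decide
  have e3 : σ13 3 = 1 := by decide
  have e4 : σ13 4 = 4 := by decide
  simp only [mC, n1, S, U, Z, Q, M2, M3, x, e0, e1, e2, e3, e4]
  ring

lemma o2_eq (v : J) : o2 v = o1 (fun i => v (σ24 i)) := by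
  have e0 : σ24 0 = 0 := by decide
  have e1 : σ24 1 = 1 := by decide
  have e2 : σ24 2 = 4 := by decide
  have e3 : σ24 3 = 3 := by decide
  have e4 : σ24 4 = 2 := by decide
  simp only [o1, o2, S, U, Z, Y, x, e0, e1, e2, e3, e4]
  ring

lemma mC_eq' (v : J) : mC v = o1 (fun i => v (c4 i)) := by
  have e0 : c4 0 = 0 := by decide
  have e1 : c4 1 = 2 := by decide
  have e2 : c4 2 = 4 := by decide
  have e3 : c4 3 = 1 := by decide
  have e4 : c4 4 = 3 := by decide
  simp only [mC, o1, S, U, Z, Y, M2, M3, x, e0, e1, e2, e3, e4]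
  ring

lemma mzv5_eq (k : Fin 5 → ℕ) :
    mzv5 k = ∑' v : J, ((S v) ^ k 0)⁻¹ * ((U v) ^ k 1)⁻¹ * ((M2 v) ^ k 2)⁻¹ *
      ((M3 v) ^ k 3)⁻¹ * ((x v 4) ^ k 4)⁻¹ := by
  unfold mzv5
  apply tsum_congr
  intro a
  rw [Fin.prod_univ_five]
  rw [show Finset.Ici (0 : Fin 5) = {0, 1, 2, 3, 4} from by decide,
    show Finset.Ici (1 : Fin 5) = {1, 2, 3, 4} from by decide,
    show Finset.Ici (2 : Fin 5) = {2, 3, 4} from by decide,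
    show Finset.Ici (3 : Fin 5) = {3, 4} from by decide,
    show Finset.Ici (4 : Fin 5) = {4} from by decide]
  rw [Finset.sum_insert (by decide), Finset.sum_insert (by decide),
    Finset.sum_insert (by decide), Finset.sum_insert (by decide),
    Finset.sum_singleton]
  simp only [S, U, M2, M3, x]
  ring

lemma mzvA : mzv5 ![4, 1, 1, 2, 1] = ∑' v, mA v := by
  rw [mzv5_eq]
  refine tsum_congr fun v => ?_
  show (S v ^ 4)⁻¹ * (U v ^ 1)⁻¹ * (M2 v ^ 1)⁻¹ * (M3 v ^ 2)⁻¹ * (x v 4 ^ 1)⁻¹ = _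
  unfold mA
  ring

lemma mzvB : mzv5 ![4, 1, 2, 1, 1] = ∑' v, mB v := by
  rw [mzv5_eq]
  refine tsum_congr fun v => ?_
  show (S v ^ 4)⁻¹ * (U v ^ 1)⁻¹ * (M2 v ^ 2)⁻¹ * (M3 v ^ 1)⁻¹ * (x v 4 ^ 1)⁻¹ = _
  unfold mB
  ring

lemma mzvC : mzv5 ![4, 2, 1, 1, 1] = ∑' v, mC v := by
  rw [mzv5_eq]
  refine tsum_congr fun v => ?_
  show (S v ^ 4)⁻¹ * (U v ^ 2)⁻¹ * (M2 v ^ 1)⁻¹ * (M3 v ^ 1)⁻¹ * (x v 4 ^ 1)⁻¹ = _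
  unfold mC
  ring

def sb (n : ℕ) : ℝ := ((n : ℝ) + 1) ^ (-(3 / 2) : ℝ)

lemma sb_pos (n : ℕ) : 0 < sb n := Real.rpow_pos_of_pos (by positivity) _

lemma summable_sb : Summable sb := by
  have h : Summable (fun n : ℕ => (n : ℝ) ^ (-(3 / 2) : ℝ)) := by
    rw [Real.summable_nat_rpow]; norm_num
  have h2 := (summable_nat_add_iff 1).mpr h
  refine h2.congr fun n => ?_
  unfold sb
  push_cast
  ring_nf

def e5 : J ≃ ℕ × ℕ × ℕ × ℕ × ℕ :=
  ⟨fun v => (v 0, v 1, v 2, v 3, v 4),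
   fun p => ![p.1, p.2.1, p.2.2.1, p.2.2.2.1, p.2.2.2.2],
   by intro v; funext i; fin_cases i <;> rfl,
   by intro p; rfl⟩

lemma summable_B : Summable (fun v : J =>
    sb (v 0) * (sb (v 1) * (sb (v 2) * (sb (v 3) * sb (v 4))))) := by
  have h1 : Summable (fun p : ℕ × ℕ => sb p.1 * sb p.2) :=
    summable_sb.mul_of_nonneg summable_sb (fun n => (sb_pos n).le) (fun n => (sb_pos n).le)
  have h2 : Summable (fun p : ℕ × ℕ × ℕ => sb p.1 * (sb p.2.1 * sb p.2.2)) :=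
    summable_sb.mul_of_nonneg h1 (fun n => (sb_pos n).le)
      (fun p => mul_nonneg (sb_pos _).le (sb_pos _).le)
  have h3 : Summable (fun p : ℕ × ℕ × ℕ × ℕ => sb p.1 * (sb p.2.1 * (sb p.2.2.1 * sb p.2.2.2))) :=
    summable_sb.mul_of_nonneg h2 (fun n => (sb_pos n).le)
      (fun p => mul_nonneg (sb_pos _).le (mul_nonneg (sb_pos _).le (sb_pos _).le))
  have h4 : Summable (fun p : ℕ × ℕ × ℕ × ℕ × ℕ =>
      sb p.1 * (sb p.2.1 * (sb p.2.2.1 * (sb p.2.2.2.1 * sb p.2.2.2.2)))) :=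
    summable_sb.mul_of_nonneg h3 (fun n => (sb_pos n).le)
      (fun p => mul_nonneg (sb_pos _).le (mul_nonneg (sb_pos _).le
        (mul_nonneg (sb_pos _).le (sb_pos _).le)))
  have h5 : Summable ((fun p : ℕ × ℕ × ℕ × ℕ × ℕ =>
      sb p.1 * (sb p.2.1 * (sb p.2.2.1 * (sb p.2.2.2.1 * sb p.2.2.2.2)))) ∘ e5) :=
    (Equiv.summable_iff e5).mpr h4
  exact h5

lemma rpow_split (t : ℝ) (ht : 0 < t) : t ^ (3 / 2 : ℝ) = t ^ (1 / 2 : ℝ) * t := by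
  rw [show (3 / 2 : ℝ) = 1 / 2 + 1 by norm_num, Real.rpow_add ht, Real.rpow_one]

lemma key_bound (v : J) : f0 v ≤ sb (v 0) * (sb (v 1) * (sb (v 2) * (sb (v 3) * sb (v 4)))) := by
  have hx : ∀ i, 0 < x v i := xpos v
  have hS := Spos v
  have hQ := Qpos v
  have hsb : ∀ i : Fin 5, sb (v i) = ((x v i) ^ (3 / 2 : ℝ))⁻¹ := by
    intro i
    unfold sb x
    rw [Real.rpow_neg (by positivity)]
  rw [hsb 0, hsb 1, hsb 2, hsb 3, hsb 4]
  have hmain : x v 0 ^ (3/2:ℝ) * x v 1 ^ (3/2:ℝ) * x v 2 ^ (3/2:ℝ) * x v 3 ^ (3/2:ℝ) *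
      x v 4 ^ (3/2:ℝ) ≤ S v ^ 4 * Q v ^ 2 * x v 2 * x v 3 * x v 4 := by
    have hle0 : x v 0 ≤ S v := by
      unfold S; nlinarith [(hx 1).le, (hx 2).le, (hx 3).le, (hx 4).le]
    have hle2 : x v 2 ≤ S v := by
      unfold S; nlinarith [(hx 0).le, (hx 1).le, (hx 3).le, (hx 4).le]
    have hle3 : x v 3 ≤ S v := by
      unfold S; nlinarith [(hx 0).le, (hx 1).le, (hx 2).le, (hx 4).le]
    have hQ1 : x v 1 ≤ Q v := by unfold Q; nlinarith [(hx 4).le]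
    have hQ4 : x v 4 ≤ Q v := by unfold Q; nlinarith [(hx 1).le]
    have hS1 : 1 ≤ S v := by
      have h1 : (1:ℝ) ≤ x v 0 := by
        unfold x; have := Nat.cast_nonneg (α := ℝ) (v 0); linarith
      unfold S; nlinarith [(hx 1).le, (hx 2).le, (hx 3).le, (hx 4).le]
    calc x v 0 ^ (3/2:ℝ) * x v 1 ^ (3/2:ℝ) * x v 2 ^ (3/2:ℝ) * x v 3 ^ (3/2:ℝ) * x v 4 ^ (3/2:ℝ)
        = (x v 0 ^ (3/2:ℝ) * x v 2 ^ (1/2:ℝ) * x v 3 ^ (1/2:ℝ)) *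
          (x v 1 ^ (3/2:ℝ) * x v 4 ^ (1/2:ℝ)) * (x v 2 * x v 3 * x v 4) := by
          rw [rpow_split _ (hx 2), rpow_split _ (hx 3), rpow_split _ (hx 4)]
          ring
      _ ≤ (S v ^ (3/2:ℝ) * S v ^ (1/2:ℝ) * S v ^ (1/2:ℝ)) *
          (Q v ^ (3/2:ℝ) * Q v ^ (1/2:ℝ)) * (x v 2 * x v 3 * x v 4) := by
          gcongr <;> first
            | exact hle0
            | exact hle2
            | exact hle3
            | exact hQ1
            | exact hQ4
            | exact (hx _).le
            | exact Real.rpow_nonneg (hx _).le _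
            | exact mul_nonneg (Real.rpow_nonneg (hx _).le _) (Real.rpow_nonneg (hx _).le _)
            | exact mul_nonneg (mul_nonneg (hx _).le (hx _).le) (hx _).le
            | exact mul_nonneg (mul_nonneg (Real.rpow_nonneg (hx _).le _)
                (Real.rpow_nonneg (hx _).le _)) (Real.rpow_nonneg (hx _).le _)
            | positivity
      _ = S v ^ (5/2:ℝ) * Q v ^ 2 * (x v 2 * x v 3 * x v 4) := by
          rw [← Real.rpow_add hS, ← Real.rpow_add hS, ← Real.rpow_add hQ]
          norm_num
      _ ≤ S v ^ (4:ℝ) * Q v ^ 2 * (x v 2 * x v 3 * x v 4) := by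
          have h45 : S v ^ (5/2:ℝ) ≤ S v ^ (4:ℝ) :=
            Real.rpow_le_rpow_of_exponent_le hS1 (by norm_num)
          have hx2 := (hx 2).le; have hx3 := (hx 3).le; have hx4 := (hx 4).le
          have hQQ : (0:ℝ) ≤ Q v ^ 2 := by positivity
          nlinarith [mul_le_mul_of_nonneg_right h45 hQQ, Real.rpow_nonneg hS.le (5/2:ℝ),
            mul_nonneg (mul_nonneg hx2 hx3) hx4,
            mul_le_mul_of_nonneg_right (mul_le_mul_of_nonneg_right h45 hQQ)
              (mul_nonneg (mul_nonneg hx2 hx3) hx4)]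
      _ = S v ^ 4 * Q v ^ 2 * x v 2 * x v 3 * x v 4 := by
          rw [show (4:ℝ) = ((4:ℕ):ℝ) by norm_num, Real.rpow_natCast]
          ring
  have hL : f0 v = (S v ^ 4 * Q v ^ 2 * x v 2 * x v 3 * x v 4)⁻¹ := by
    unfold f0
    rw [mul_inv, mul_inv, mul_inv, mul_inv]
  have hR : ((x v 0) ^ (3/2:ℝ))⁻¹ * (((x v 1) ^ (3/2:ℝ))⁻¹ * (((x v 2) ^ (3/2:ℝ))⁻¹ *
      (((x v 3) ^ (3/2:ℝ))⁻¹ * ((x v 4) ^ (3/2:ℝ))⁻¹))) =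
      (x v 0 ^ (3/2:ℝ) * x v 1 ^ (3/2:ℝ) * x v 2 ^ (3/2:ℝ) * x v 3 ^ (3/2:ℝ) *
        x v 4 ^ (3/2:ℝ))⁻¹ := by
    rw [mul_inv, mul_inv, mul_inv, mul_inv]
    ring
  rw [hL, hR]
  apply inv_anti₀
  · exact mul_pos (mul_pos (mul_pos (mul_pos (Real.rpow_pos_of_pos (hx 0) _)
      (Real.rpow_pos_of_pos (hx 1) _)) (Real.rpow_pos_of_pos (hx 2) _))
      (Real.rpow_pos_of_pos (hx 3) _)) (Real.rpow_pos_of_pos (hx 4) _)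
  · exact hmain

lemma summable_f0 : Summable f0 :=
  summable_B.of_nonneg_of_le
    (fun v => by unfold f0 S Q x; positivity) key_bound

end
end Stmt14aux

open Stmt14aux in
/-- with `p,q,r,s,t = v 0 + 1, …, v 4 + 1`,
`∑_{p,q,r,s,t ≥ 1} 1/((p+q+r+s+t)^4 (q+t)^2 r s t)
  = 2ζ(4,1,1,2,1) + 6ζ(4,1,2,1,1) + 12ζ(4,2,1,1,1)`. -/
theorem stmt14 :
    Summable (fun v : Fin 5 → ℕ =>
      (1 : ℝ) / ((∑ i, ((v i : ℝ) + 1)) ^ 4 *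
        (((v 1 : ℝ) + 1) + ((v 4 : ℝ) + 1)) ^ 2 *
        ((v 2 : ℝ) + 1) * ((v 3 : ℝ) + 1) * ((v 4 : ℝ) + 1))) ∧
    (∑' v : Fin 5 → ℕ,
      (1 : ℝ) / ((∑ i, ((v i : ℝ) + 1)) ^ 4 *
        (((v 1 : ℝ) + 1) + ((v 4 : ℝ) + 1)) ^ 2 *
        ((v 2 : ℝ) + 1) * ((v 3 : ℝ) + 1) * ((v 4 : ℝ) + 1)))
    = 2 * mzv5 ![4, 1, 1, 2, 1] + 6 * mzv5 ![4, 1, 2, 1, 1] + 12 * mzv5 ![4, 2, 1, 1, 1] := by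
  have stmt_eq : ∀ v : Fin 5 → ℕ,
      (1 : ℝ) / ((∑ i, ((v i : ℝ) + 1)) ^ 4 *
        (((v 1 : ℝ) + 1) + ((v 4 : ℝ) + 1)) ^ 2 *
        ((v 2 : ℝ) + 1) * ((v 3 : ℝ) + 1) * ((v 4 : ℝ) + 1)) = f0 v := by
    intro v
    rw [Fin.sum_univ_five]
    simp only [f0, S, Q, x]
    rw [one_div, mul_inv, mul_inv, mul_inv, mul_inv]
  -- summability bookkeeping
  have smf0 := summable_f0
  obtain ⟨smgA, smgB⟩ := split_summable2 smf0 f0_split gA_nn gB_nn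
  obtain ⟨smh2, smh3, smh4⟩ := split_summable3 smgA gA_split h2_nn h3_nn h4_nn
  obtain ⟨smkA, smkB, smkc⟩ := split_summable3 smh2 h2_split kA_nn kB_nn kc_nn
  obtain ⟨smn1, smn2⟩ := split_summable2 smh3 h3_split n1_nn n2_nn
  -- tsum identities
  have T0 : ∑' v, f0 v = ∑' v, gA v + ∑' v, gB v := split_tsum2 smf0 f0_split gA_nn gB_nn
  have TB : ∑' v, gB v = ∑' v, gA v := reindex_tsum σ23 gB_eq
  have T1 : ∑' v, gA v = ∑' v, h2 v + ∑' v, h3 v + ∑' v, h4 v :=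
    split_tsum3 smgA gA_split h2_nn h3_nn h4_nn
  have T4 : ∑' v, h4 v = ∑' v, h3 v := reindex_tsum σ2 h4_eq
  have T2 : ∑' v, h2 v = ∑' v, kA v + ∑' v, kB v + ∑' v, kc v :=
    split_tsum3 smh2 h2_split kA_nn kB_nn kc_nn
  have TkA : mzv5 ![4, 1, 1, 2, 1] = ∑' v, kA v := by
    rw [mzvA]; exact reindex_tsum σ13 mA_eq
  have TkB : mzv5 ![4, 1, 2, 1, 1] = ∑' v, kB v := by
    rw [mzvB]; exact reindex_tsum σ13 mB_eq
  have Tkc : ∑' v, kc v = ∑' v, l1 v + ∑' v, l2 v := split_tsum2 smkc kc_split l1_nn l2_nn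
  have Tl2 : ∑' v, l2 v = ∑' v, l1 v := reindex_tsum σ24 l2_eq
  have Tl1 : mzv5 ![4, 1, 2, 1, 1] = ∑' v, l1 v := by
    rw [mzvB]; exact reindex_tsum c4 mB_eq'
  have T3 : ∑' v, h3 v = ∑' v, n1 v + ∑' v, n2 v := split_tsum2 smh3 h3_split n1_nn n2_nn
  have Tn1 : mzv5 ![4, 2, 1, 1, 1] = ∑' v, n1 v := by
    rw [mzvC]; exact reindex_tsum σ13 mC_eq
  have Tn2 : ∑' v, n2 v = ∑' v, o1 v + ∑' v, o2 v := split_tsum2 smn2 n2_split o1_nn o2_nn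
  have To2 : ∑' v, o2 v = ∑' v, o1 v := reindex_tsum σ24 o2_eq
  have To1 : mzv5 ![4, 2, 1, 1, 1] = ∑' v, o1 v := by
    rw [mzvC]; exact reindex_tsum c4 mC_eq'
  constructor
  · exact (summable_congr stmt_eq).mpr smf0
  · calc (∑' v : Fin 5 → ℕ,
        (1 : ℝ) / ((∑ i, ((v i : ℝ) + 1)) ^ 4 *
          (((v 1 : ℝ) + 1) + ((v 4 : ℝ) + 1)) ^ 2 *
          ((v 2 : ℝ) + 1) * ((v 3 : ℝ) + 1) * ((v 4 : ℝ) + 1)))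
        = ∑' v, f0 v := tsum_congr stmt_eq
      _ = 2 * mzv5 ![4, 1, 1, 2, 1] + 6 * mzv5 ![4, 1, 2, 1, 1] + 12 * mzv5 ![4, 2, 1, 1, 1] := by
        linarith [T0, TB, T1, T4, T2, TkA, TkB, Tkc, Tl2, Tl1, T3, Tn1, Tn2, To2, To1]
end

section
/- Let s ≥ 1 and s_1, ..., s_r ≥ 1. Then convergence of the series MT(s_1,...,s_r | s) holds under the Bradley–Zhou criterion: if for every k ∈ {1,...,r} (with s_1 ≤ ⋯ ≤ s_r) we have s + s_1 + ⋯ + s_k > k, then ∑_{n_1,...,n_r ≥ 1} 1/(n_1^{s_1} ⋯ n_r^{s_r} (n_1 + ⋯ + n_r)^s) < ∞. -/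
lemma aux_one (p : ℝ) (hp : 1 < p) :
    Summable (fun n : ℕ => ((n : ℝ) + 1) ^ (-p)) := by
  have h := (Real.summable_nat_rpow_inv.mpr hp)
  have h2 := (summable_nat_add_iff (f := fun n : ℕ => ((n : ℝ) ^ p)⁻¹) 1).mpr h
  refine h2.congr fun n => ?_
  rw [Real.rpow_neg (by positivity), Nat.cast_add, Nat.cast_one]

lemma aux_pi (r : ℕ) (p : ℝ) (hp : 1 < p) :
    Summable (fun n : Fin r → ℕ => ∏ i, ((n i : ℝ) + 1) ^ (-p)) := by
  induction r with
  | zero => exact .of_finite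
  | succ r ih =>
    have key := ((aux_one p hp).mul_of_nonneg ih (fun n => by positivity)
      (fun n => Finset.prod_nonneg fun i _ => by positivity))
    refine ((Fin.consEquiv fun _ : Fin (r+1) => ℕ).summable_iff (f := fun n : Fin (r+1) → ℕ => ∏ i, ((n i : ℝ) + 1) ^ (-p))).mp ?_
    refine key.congr fun x => ?_
    simp [Fin.consEquiv, Fin.prod_univ_succ]

/-- Bradley–Zhou criterion: for `s ≥ 1` and
`1 ≤ s_1 ≤ ⋯ ≤ s_r`, if `s + s_1 + ⋯ + s_k > k` for every `k ∈ {1,…,r}`, then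
the Mordell–Tornheim series converges. -/
theorem stmt18 (r : ℕ) (s : ℕ) (hs : 1 ≤ s) (t : Fin r → ℕ)
    (ht : ∀ i, 1 ≤ t i) (hmono : Monotone t)
    (hcrit : ∀ k : Fin r, (k : ℕ) + 1 < s + ∑ i ∈ Finset.Iic k, t i) :
    Summable (fun n : Fin r → ℕ =>
      (1 : ℝ) / ((∏ i, ((n i : ℝ) + 1) ^ t i) * (∑ i, ((n i : ℝ) + 1)) ^ s)) := by
  rcases Nat.eq_zero_or_pos r with hr | hr
  · subst hr; exact .of_finite
  have hr' : (0 : ℝ) < r := by exact_mod_cast hr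
  set q : ℝ := (s : ℝ) / r with hq
  have hq0 : 0 < q := by
    have hs' : (0 : ℝ) < s := by exact_mod_cast Nat.lt_of_lt_of_le Nat.zero_lt_one hs
    positivity
  have hp1 : 1 < 1 + q := by linarith
  refine Summable.of_nonneg_of_le (fun n => by positivity) (fun n => ?_) (aux_pi r (1 + q) hp1)
  set a : Fin r → ℝ := fun i => (n i : ℝ) + 1 with hadef
  have ha : ∀ i, (1 : ℝ) ≤ a i := fun i => by simp [hadef]
  have ha0 : ∀ i, (0 : ℝ) ≤ a i := fun i => zero_le_one.trans (ha i)
  have hA1 : (1 : ℝ) ≤ ∏ i, a i := by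
    calc (1 : ℝ) = ∏ _i : Fin r, (1 : ℝ) := by simp
      _ ≤ ∏ i, a i := Finset.prod_le_prod (by simp) (fun i _ => ha i)
  have hA0 : (0 : ℝ) < ∏ i, a i := lt_of_lt_of_le one_pos hA1
  have hS0 : (0 : ℝ) < ∑ i, a i := by
    refine Finset.sum_pos (fun i _ => lt_of_lt_of_le one_pos (ha i)) ?_
    exact Finset.univ_nonempty_iff.mpr (Fin.pos_iff_nonempty.mp hr)
  have h1 : ∏ i, a i ≤ ∏ i, a i ^ t i := by
    refine Finset.prod_le_prod (fun i _ => ha0 i) (fun i _ => ?_)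
    calc a i = a i ^ 1 := (pow_one _).symm
      _ ≤ a i ^ t i := pow_le_pow_right₀ (ha i) (ht i)
  have hAS : ∏ i, a i ≤ (∑ i, a i) ^ r := by
    calc ∏ i, a i ≤ ∏ _i : Fin r, ∑ i, a i :=
          Finset.prod_le_prod (fun i _ => ha0 i)
            (fun i _ => Finset.single_le_sum (fun j _ => ha0 j) (Finset.mem_univ i))
      _ = (∑ i, a i) ^ r := by rw [Finset.prod_const, Finset.card_univ, Fintype.card_fin]
  have h2 : (∏ i, a i) ^ q ≤ (∑ i, a i) ^ s := by
    calc (∏ i, a i) ^ q ≤ ((∑ i, a i) ^ r) ^ q :=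
          Real.rpow_le_rpow hA0.le hAS hq0.le
      _ = (∑ i, a i) ^ s := by
          rw [← Real.rpow_natCast (∑ i, a i) r, ← Real.rpow_mul hS0.le, hq]
          rw [show (r : ℝ) * ((s : ℝ) / r) = (s : ℝ) by field_simp]
          exact Real.rpow_natCast _ s
  have hprod : ∏ i, a i ^ (-(1 + q)) = (∏ i, a i) ^ (-(1 + q)) :=
    Real.finset_prod_rpow _ _ (fun i _ => ha0 i) _
  rw [hprod, Real.rpow_neg hA0.le, Real.rpow_add hA0, Real.rpow_one, ← one_div]
  refine one_div_le_one_div_of_le (by positivity) ?_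
  exact mul_le_mul h1 h2 (Real.rpow_nonneg hA0.le _) (Finset.prod_nonneg fun i _ => by positivity)
end
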